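/- arXiv:2109.10136 — 7 statements merged into one kernel-verified Lean document; each statement's English description precedes it below -/
import Mathlib

section
/- For all integers a ≥ 1 and N ≥ 1, Δ_{a,N} = Π p^{min(a, ⌊N/p^e⌋)}, where the product is over all pairs (p, e) with p a prime number, e ≥ 1 an integer, and p^e ≤ N. -/
/-!
Compare `p`-adic valuations. For a set `s` of integers occurring in `Δ_{a,N}`,
`v_p(∏ s) = ∑_{e ≥ 1} #{x ∈ s | p^e ∣ x}`, and the `e`-th term is at most `min a ⌊N/p^e⌋`:
`s` has at most `a` elements, and dividing by `p^e` shows that at most `⌊N/p^e⌋` nonzero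
multiples of `p^e` fit into a window of length `N` inside `[-N, N]`. Conversely, the sets `M_e`
of multiples of `p^e` in `[1, N]` form a decreasing chain with `#M_e = ⌊N/p^e⌋`, and a set of at
most `a` elements meeting every `M_e` in at least `min a #M_e` elements, built greedily from the
top of the chain down, attains the bound.
-/

/-- `Δ_{a,N}`: the lcm of all products of at most `a` pairwise distinct nonzero
integers in `[-N, N]` whose mutual distances are at most `N`. -/
noncomputable def Delta (a N : ℕ) : ℕ :=
  ((Finset.Icc (-(N : ℤ)) (N : ℤ)).powerset.filter (fun s =>
    s.Nonempty ∧ s.card ≤ a ∧ (0 : ℤ) ∉ s ∧ ∀ x ∈ s, ∀ y ∈ s, x - y ≤ (N : ℤ))).lcm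
    (fun s => (s.prod id).natAbs)

open Finset

/-- `∑_{e ≥ 1, p^e ≤ N} min(a, ⌊N/p^e⌋)`: the terms with `p^e > N` vanish, and for `p ≥ 2`
these include all `e > N`. -/
def deltaExponent (a N p : ℕ) : ℕ :=
  ∑ e ∈ Icc 1 N, min a (N / p ^ e)

lemma deltaExponent_eq_zero_of_lt {a N p : ℕ} (h : N < p) : deltaExponent a N p = 0 :=
  sum_eq_zero fun e he => by
    rw [Nat.div_eq_of_lt (h.trans_le (Nat.le_self_pow (by grind) p)), _root_.min_zero]

lemma prod_filter_prime_pow_eq (a N : ℕ) :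
    ∏ pe ∈ ((range (N + 1)) ×ˢ (Icc 1 N)).filter (fun pe => pe.1.Prime ∧ pe.1 ^ pe.2 ≤ N),
      pe.1 ^ (min a (N / pe.1 ^ pe.2))
      = ∏ p ∈ (range (N + 1)).filter Nat.Prime, p ^ deltaExponent a N p := by
  rw [prod_filter, prod_product, prod_filter]
  refine prod_congr rfl fun p _ => ?_
  by_cases hp : p.Prime
  · rw [if_pos hp, deltaExponent, ← prod_pow_eq_pow_sum]
    refine prod_congr rfl fun e _ => ?_
    by_cases he : p ^ e ≤ N
    · rw [if_pos ⟨hp, he⟩]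
    · rw [if_neg (by tauto), Nat.div_eq_of_lt (not_le.1 he), _root_.min_zero, pow_zero]
  · simp [hp]

lemma factorization_prod_pow_deltaExponent {a N p : ℕ} (hp : p.Prime) :
    (∏ q ∈ (range (N + 1)).filter Nat.Prime, q ^ deltaExponent a N q).factorization p
      = deltaExponent a N p := by
  rw [Nat.factorization_prod fun q hq => pow_ne_zero _ (mem_filter.1 hq).2.ne_zero,
    sum_apply', sum_congr rfl fun q hq => by rw [(mem_filter.1 hq).2.factorization_pow]]
  simp only [Finsupp.single_apply, sum_ite_eq', mem_filter, mem_range, hp, and_true]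
  split_ifs with hpN
  · rfl
  · exact (deltaExponent_eq_zero_of_lt (by omega)).symm

lemma factorization_eq_card_filter_pow_dvd {n N p : ℕ} (hp : p.Prime) (hn : n ≠ 0) (hnN : n ≤ N) :
    n.factorization p = #{e ∈ Icc 1 N | p ^ e ∣ n} := by
  rw [Nat.factorization_eq_card_pow_dvd n hp,
    Nat.Ico_filter_pow_dvd_eq hp hn (hnN.trans (Nat.lt_pow_self hp.one_lt).le)]

lemma natAbs_prod_ne_zero {s : Finset ℤ} (h0 : (0 : ℤ) ∉ s) : (s.prod id).natAbs ≠ 0 :=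
  Int.natAbs_ne_zero.2 (prod_ne_zero_iff.2 fun _ hx h => h0 (h ▸ hx))

lemma factorization_natAbs_prod_eq_sum_card {N p : ℕ} (hp : p.Prime) {s : Finset ℤ}
    (h0 : (0 : ℤ) ∉ s) (hN : ∀ x ∈ s, x.natAbs ≤ N) :
    (s.prod id).natAbs.factorization p = ∑ e ∈ Icc 1 N, #{x ∈ s | p ^ e ∣ x.natAbs} := by
  have hne : ∀ x ∈ s, x.natAbs ≠ 0 := fun x hx h => h0 (Int.natAbs_eq_zero.1 h ▸ hx)
  rw [show (s.prod id).natAbs = ∏ x ∈ s, x.natAbs from map_prod Int.natAbsHom id s,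
    Nat.factorization_prod hne, sum_apply',
    sum_congr rfl fun x hx => factorization_eq_card_filter_pow_dvd hp (hne x hx) (hN x hx)]
  simp only [card_filter]
  exact sum_comm

lemma card_le_of_sub_le {M : ℕ} {u : Finset ℤ} (hu : u ⊆ Icc (-(M : ℤ)) M) (h0 : (0 : ℤ) ∉ u)
    (hsub : ∀ x ∈ u, ∀ y ∈ u, x - y ≤ M) : #u ≤ M := by
  rcases u.eq_empty_or_nonempty with rfl | hne
  · simp
  set m := u.min' hne
  have hm : m ∈ u := u.min'_mem hne
  rcases lt_or_ge 0 m with hpos | hnonpos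
  · calc #u ≤ #(Icc (1 : ℤ) M) :=
          card_le_card fun y hy => mem_Icc.2 ⟨hpos.trans_le (u.min'_le y hy), (mem_Icc.1 (hu hy)).2⟩
      _ = M := by simp
  · have h0m : (0 : ℤ) ∈ Icc m (m + M) := mem_Icc.2 ⟨hnonpos, by linarith [(mem_Icc.1 (hu hm)).1]⟩
    calc #u ≤ #((Icc m (m + M)).erase 0) := card_le_card fun y hy => mem_erase.2
          ⟨fun h => h0 (h ▸ hy), mem_Icc.2 ⟨u.min'_le y hy, by linarith [hsub y hy m hm]⟩⟩
      _ = M := by rw [card_erase_of_mem h0m, Int.card_Icc]; omega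

lemma card_filter_dvd_le {N d : ℕ} (hd : 0 < d) {s : Finset ℤ} (hs : s ⊆ Icc (-(N : ℤ)) N)
    (h0 : (0 : ℤ) ∉ s) (hsub : ∀ x ∈ s, ∀ y ∈ s, x - y ≤ N) : #{x ∈ s | (d : ℤ) ∣ x} ≤ N / d := by
  have hd' : (0 : ℤ) < d := by exact_mod_cast hd
  have hdvd : ∀ x ∈ {x ∈ s | (d : ℤ) ∣ x}, x ∈ s ∧ (d : ℤ) ∣ x := fun x hx => mem_filter.1 hx
  have hle : ∀ x ∈ s, x / d ≤ ((N / d : ℕ) : ℤ) := fun x hx => by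
    rw [Int.natCast_ediv]; exact Int.ediv_le_ediv hd' (mem_Icc.1 (hs hx)).2
  rw [← card_image_of_injOn fun x hx y hy h =>
    (Int.ediv_left_inj (hdvd x hx).2 (hdvd y hy).2).1 h]
  refine card_le_of_sub_le (fun q hq => ?_) (fun hq => ?_) fun q hq q' hq' => ?_
  · obtain ⟨x, hx, rfl⟩ := mem_image.1 hq
    have hneg : -x / d ≤ ((N / d : ℕ) : ℤ) := by
      rw [Int.natCast_ediv]
      exact Int.ediv_le_ediv hd' (by linarith [(mem_Icc.1 (hs (hdvd x hx).1)).1])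
    rw [Int.neg_ediv_of_dvd (hdvd x hx).2] at hneg
    exact mem_Icc.2 ⟨by linarith, hle x (hdvd x hx).1⟩
  · obtain ⟨x, hx, hx0⟩ := mem_image.1 hq
    have : x = 0 := by rw [← Int.ediv_mul_cancel (hdvd x hx).2, hx0, zero_mul]
    exact h0 (this ▸ (hdvd x hx).1)
  · obtain ⟨x, hx, rfl⟩ := mem_image.1 hq
    obtain ⟨y, hy, rfl⟩ := mem_image.1 hq'
    rw [← Int.sub_ediv_of_dvd x (hdvd y hy).2, Int.natCast_ediv]
    exact Int.ediv_le_ediv hd' (hsub x (hdvd x hx).1 y (hdvd y hy).1)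

lemma factorization_natAbs_prod_le_deltaExponent {a N p : ℕ} (hp : p.Prime) {s : Finset ℤ}
    (hs : s ⊆ Icc (-(N : ℤ)) N) (hcard : #s ≤ a) (h0 : (0 : ℤ) ∉ s)
    (hsub : ∀ x ∈ s, ∀ y ∈ s, x - y ≤ N) :
    (s.prod id).natAbs.factorization p ≤ deltaExponent a N p := by
  rw [factorization_natAbs_prod_eq_sum_card (N := N) hp h0 fun x hx => by
    have := mem_Icc.1 (hs hx); omega]
  refine sum_le_sum fun e _ => le_min ((card_filter_le _ _).trans hcard) ?_
  simpa only [Int.natCast_dvd] using card_filter_dvd_le (pow_pos hp.pos e) hs h0 hsub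

lemma exists_subset_card_eq_min_le_card_inter {α : Type*} [DecidableEq α] {M : ℕ → Finset α}
    (hM : Antitone M) (a k n : ℕ) :
    ∃ s ⊆ M n, #s = min a #(M n) ∧ ∀ e ∈ Icc n (n + k), min a #(M e) ≤ #(s ∩ M e) := by
  induction k generalizing n with
  | zero =>
    obtain ⟨s, hs, hcard⟩ := exists_subset_card_eq (min_le_right a #(M n))
    refine ⟨s, hs, hcard, fun e he => ?_⟩
    obtain rfl : e = n := by simpa using he
    rw [inter_eq_left.2 hs, hcard]
  | succ k ih =>
    obtain ⟨t, ht, htcard, htinter⟩ := ih (n + 1)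
    have hMsucc : M (n + 1) ⊆ M n := hM n.le_succ
    obtain ⟨s, hts, hs, hcard⟩ := exists_subsuperset_card_eq (ht.trans hMsucc)
      (htcard.trans_le (min_le_min_left a (card_le_card hMsucc))) (min_le_right a #(M n))
    refine ⟨s, hs, hcard, fun e he => ?_⟩
    rcases eq_or_lt_of_le (mem_Icc.1 he).1 with rfl | hne
    · rw [inter_eq_left.2 hs, hcard]
    · exact (htinter e (mem_Icc.2 ⟨hne, by grind⟩)).trans
        (card_le_card (inter_subset_inter_right hts))

lemma exists_subset_Icc_deltaExponent_le (a N p : ℕ) :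
    ∃ t ⊆ Icc 1 N, #t ≤ a ∧ deltaExponent a N p ≤ ∑ e ∈ Icc 1 N, #{n ∈ t | p ^ e ∣ n} := by
  set M : ℕ → Finset ℕ := fun e => {n ∈ Icc 1 N | p ^ e ∣ n}
  have hM : Antitone M := fun e e' hee' =>
    monotone_filter_right _ fun _ _ hdvd => (pow_dvd_pow p hee').trans hdvd
  obtain ⟨t, ht, htcard, hinter⟩ := exists_subset_card_eq_min_le_card_inter hM a N 1
  refine ⟨t, ht.trans (filter_subset _ _), htcard ▸ min_le_left _ _, sum_le_sum fun e he => ?_⟩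
  calc min a (N / p ^ e) = min a #(M e) := by rw [← Nat.Ioc_filter_dvd_card_eq_div]; rfl
    _ ≤ #(t ∩ M e) := hinter e (by grind)
    _ ≤ #{n ∈ t | p ^ e ∣ n} := card_le_card fun n hn => by
        simp only [M, mem_inter, mem_filter] at hn ⊢; exact ⟨hn.1, hn.2.2⟩

lemma delta_dvd_iff {a N m : ℕ} :
    Delta a N ∣ m ↔ ∀ s ⊆ Icc (-(N : ℤ)) N, s.Nonempty → #s ≤ a → (0 : ℤ) ∉ s →
      (∀ x ∈ s, ∀ y ∈ s, x - y ≤ N) → (s.prod id).natAbs ∣ m := by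
  simp only [Delta, Finset.lcm_dvd_iff, mem_filter, mem_powerset, and_imp]

lemma delta_ne_zero (a N : ℕ) : Delta a N ≠ 0 := by
  rw [Delta, Ne, Finset.lcm_eq_zero_iff]
  rintro ⟨s, hs, hprod⟩
  obtain ⟨x, hx, hx0⟩ := prod_eq_zero_iff.1 (Int.natAbs_eq_zero.1 hprod)
  exact (mem_filter.1 hs).2.2.2.1 (hx0 ▸ hx)

lemma deltaExponent_le_factorization_delta {a N p : ℕ} (hp : p.Prime) :
    deltaExponent a N p ≤ (Delta a N).factorization p := by
  obtain ⟨t, htN, hta, hle⟩ := exists_subset_Icc_deltaExponent_le a N p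
  rcases t.eq_empty_or_nonempty with rfl | ht
  · simp only [filter_empty, card_empty, sum_const_zero, nonpos_iff_eq_zero] at hle
    simp [hle]
  set s : Finset ℤ := t.map Nat.castEmbedding
  have hsN : ∀ x ∈ s, 1 ≤ x ∧ x ≤ N := by
    simp only [s, mem_map, Nat.castEmbedding_apply]
    rintro _ ⟨n, hn, rfl⟩
    have := mem_Icc.1 (htN hn)
    omega
  have h0 : (0 : ℤ) ∉ s := fun h => absurd (hsN 0 h).1 (by norm_num)
  have hfact : (s.prod id).natAbs.factorization p = ∑ e ∈ Icc 1 N, #{n ∈ t | p ^ e ∣ n} := by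
    rw [factorization_natAbs_prod_eq_sum_card (N := N) hp h0 fun x hx => by have := hsN x hx; omega]
    simp [s, filter_map]
  have hdvd : (s.prod id).natAbs ∣ Delta a N :=
    delta_dvd_iff.1 dvd_rfl s (fun x hx => mem_Icc.2 (by have := hsN x hx; omega)) ht.map
      (by simpa [s] using hta) h0 fun x hx y hy => by linarith [hsN x hx, hsN y hy]
  calc deltaExponent a N p ≤ (s.prod id).natAbs.factorization p := hfact ▸ hle
    _ ≤ (Delta a N).factorization p :=
      (Nat.factorization_le_iff_dvd (natAbs_prod_ne_zero h0) (delta_ne_zero a N)).2 hdvd p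

theorem stmt8_general (a N : ℕ) :
    Delta a N = ∏ pe ∈ ((Finset.range (N + 1)) ×ˢ (Finset.Icc 1 N)).filter
        (fun pe => pe.1.Prime ∧ pe.1 ^ pe.2 ≤ N),
      pe.1 ^ (min a (N / pe.1 ^ pe.2)) := by
  rw [prod_filter_prime_pow_eq]
  set R := ∏ p ∈ (range (N + 1)).filter Nat.Prime, p ^ deltaExponent a N p
  have hR : R ≠ 0 := prod_ne_zero_iff.2 fun p hp => pow_ne_zero _ (mem_filter.1 hp).2.ne_zero
  refine Nat.dvd_antisymm (delta_dvd_iff.2 fun s hs _ hcard h0 hsub => ?_)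
    ((Nat.factorization_prime_le_iff_dvd hR (delta_ne_zero a N)).1 fun p hp => ?_)
  · refine (Nat.factorization_prime_le_iff_dvd (natAbs_prod_ne_zero h0) hR).1 fun p hp => ?_
    rw [factorization_prod_pow_deltaExponent hp]
    exact factorization_natAbs_prod_le_deltaExponent hp hs hcard h0 hsub
  · rw [factorization_prod_pow_deltaExponent hp]
    exact deltaExponent_le_factorization_delta hp

/-- `Δ_{a,N} = ∏_{p^e ≤ N} p^{min(a, ⌊N/p^e⌋)}`, the product being over prime
powers `p^e ≤ N` with `e ≥ 1`. -/
theorem stmt8 (a N : ℕ) (ha : 1 ≤ a) (hN : 1 ≤ N) :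
    Delta a N = ∏ pe ∈ ((Finset.range (N + 1)) ×ˢ (Finset.Icc 1 N)).filter
        (fun pe => pe.1.Prime ∧ pe.1 ^ pe.2 ≤ N),
      pe.1 ^ (min a (N / pe.1 ^ pe.2)) :=
  stmt8_general a N
end

section
/- For every positive integer N, the least common multiple of the binomial coefficients C(N, i) for 0 ≤ i ≤ N equals d_{N+1}/(N+1), where d_{N+1} = lcm(1, 2, …, N+1). -/
/-!
Since `(N + 1) * C(N, i) = (i + 1) * C(N + 1, i + 1)`, the left-hand side is the lcm of the
numbers `k * C(N + 1, k)` for `1 ≤ k ≤ N + 1`; each `k` divides one of them, and each of them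
divides `lcm(1, …, N + 1)`. The latter is a `p`-adic statement: by Kummer's theorem `v_p C(n, k)`
counts the carries when adding `k` and `n - k` in base `p`, and there is no carry in the
`v_p(k)` lowest digits, so `v_p(k) + v_p C(n, k) ≤ ⌊log_p n⌋ = v_p lcm(1, …, n)`.
-/

open Finset

theorem Finset.Nonempty.lcm_mul_right {α β : Type*} [CommMonoidWithZero α]
    [StrongNormalizedGCDMonoid α] {s : Finset β} (hs : s.Nonempty) (f : β → α) (a : α) :
    (s.lcm fun x ↦ f x * a) = s.lcm f * normalize a := by
  classical
  induction hs using Finset.Nonempty.cons_induction with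
  | singleton b => simp
  | cons b s hb hs ih =>
    rw [cons_eq_insert, lcm_insert, lcm_insert, ih, ← _root_.lcm_mul_right]
    exact lcm_eq_of_associated_right ((normalize_associated a).mul_left _) _

namespace Nat

variable {p n k : ℕ}

theorem factorization_add_factorization_choose_le_log (hkn : k ≤ n) :
    k.factorization p + (choose n k).factorization p ≤ log p n := by
  rcases eq_or_ne k 0 with rfl | hk
  · simp
  by_cases hp : p.Prime
  swap
  · simp [factorization_eq_zero_of_not_prime _ hp]
  have hdisj : Disjoint {i ∈ Ico 1 (log p n + 1) | p ^ i ∣ k}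
      {i ∈ Ico 1 (log p n + 1) | p ^ i ≤ k % p ^ i + (n - k) % p ^ i} := by
    simp +contextual [Finset.disjoint_left, dvd_iff_mod_eq_zero, Nat.mod_lt _ (pow_pos hp.pos _)]
  rw [factorization_choose hp hkn (lt_add_one _),
    factorization_eq_card_pow_dvd_of_lt hp (pos_of_ne_zero hk)
      (hkn.trans_lt (lt_pow_succ_log_self hp.one_lt n)), ← card_union_of_disjoint hdisj]
  exact (card_le_card (union_subset (filter_subset ..) (filter_subset ..))).trans_eq
    (card_Ico ..)

theorem mul_choose_dvd_lcmUpto (hk : k ≠ 0) (hkn : k ≤ n) : k * choose n k ∣ lcmUpto n := by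
  rw [← factorization_prime_le_iff_dvd (mul_ne_zero hk (choose_ne_zero hkn)) (lcmUpto_ne_zero n)]
  intro p hp
  rw [factorization_mul hk (choose_ne_zero hkn), Finsupp.add_apply, factorization_lcmUpto n hp]
  exact factorization_add_factorization_choose_le_log hkn

end Nat

theorem stmt10_general (N : ℕ) :
    (Finset.range (N + 1)).lcm (fun i => Nat.choose N i) * (N + 1)
      = (Finset.Icc 1 (N + 1)).lcm id := by
  have hshift (i : ℕ) : N.choose i * (N + 1) = (i + 1) * (N + 1).choose (i + 1) := by
    rw [mul_comm, Nat.add_one_mul_choose_eq, mul_comm]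
  change _ = Nat.lcmUpto (N + 1)
  have hlcm := (nonempty_range_add_one (n := N)).lcm_mul_right N.choose (N + 1)
  rw [normalize_eq] at hlcm
  rw [← hlcm]
  refine Nat.dvd_antisymm (lcm_dvd fun i hi ↦ ?_) (lcm_dvd fun m hm ↦ ?_)
  · rw [hshift]
    exact Nat.mul_choose_dvd_lcmUpto i.succ_ne_zero (by simpa using hi)
  · obtain ⟨i, rfl⟩ := Nat.exists_eq_add_one.2 (mem_Icc.1 hm).1
    have hi : i ∈ range (N + 1) := mem_range.2 (by grind)
    calc i + 1 ∣ (i + 1) * (N + 1).choose (i + 1) := dvd_mul_right _ _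
      _ = N.choose i * (N + 1) := (hshift i).symm
      _ ∣ _ := dvd_lcm (f := fun i ↦ N.choose i * (N + 1)) hi

/-- Lemma 4 of the paper (Farhi): the lcm of the binomial coefficients
`C(N,0), …, C(N,N)` equals `d_{N+1}/(N+1)` where `d_{N+1} = lcm(1, …, N+1)`
(stated multiplicatively). -/
theorem stmt10 (N : ℕ) (hN : 1 ≤ N) :
    (Finset.range (N + 1)).lcm (fun i => Nat.choose N i) * (N + 1)
      = (Finset.Icc 1 (N + 1)).lcm id :=
  stmt10_general N
end

section
/- With P_{k,i} defined from arbitrary real coefficients c_{i,j} as in the recursion below, for every integer k ≥ 1 and every i with 1 ≤ i ≤ a: P_{k,i}(z) = Σ_{t=1−k}^{n+1−k} z^t · ( Σ_{I=i}^{min(a, i+k−1)} c_{I, t+k−1} · (−1)^{I−i} · Σ_{h ∈ H_{I−i,k}} κ(t+k−1, k, h) ). -/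
/-- `famA g k i` is the polynomial `z^{k-1} P_{k,i}(z)` where `P_{1,i} = g i` and
`P_{k,i} = P'_{k-1,i} - (1/z) P_{k-1,i+1}`; equivalently it satisfies the
recursion `A_{k,i} = -(k-2) A_{k-1,i} + z A'_{k-1,i} - A_{k-1,i+1}`. -/
noncomputable def famA {R : Type*} [CommRing R] (g : ℕ → Polynomial R) :
    ℕ → ℕ → Polynomial R
  | 0, _ => 0
  | 1, i => g i
  | (k + 2), i =>
      -(Polynomial.C ((k : ℕ) : R) * famA g (k + 1) i)
        + Polynomial.X * (famA g (k + 1) i).derivative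
        - famA g (k + 1) (i + 1)

/-- `H_{ℓ,k}`: tuples `(h₀, …, h_ℓ)` of positive integers with `h₀ + ⋯ + h_ℓ = k`. -/
def Hset (ℓ k : ℕ) : Finset (Fin (ℓ + 1) → ℕ) :=
  (Fintype.piFinset fun _ : Fin (ℓ + 1) => Finset.Icc 1 k).filter (fun h => ∑ i, h i = k)

/-- `κ(T,k,h) = (T(T-1)⋯(T-k+2)) / ∏_{i=0}^{ℓ-1} (T+1-∑_{j≤i} h_j)`, with the
convention that a factor vanishing in both numerator and denominator is omitted
from both: since the denominator factors are distinct factors of the numerator,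
this equals the product of the remaining numerator factors. -/
def kappa (T : ℤ) (k : ℕ) {ℓ : ℕ} (h : Fin (ℓ + 1) → ℕ) : ℤ :=
  ∏ m ∈ Finset.range (k - 1) \
      ((Finset.range ℓ).image fun i =>
        (∑ j ∈ Finset.univ.filter (fun j : Fin (ℓ + 1) => (j : ℕ) ≤ i), h j) - 1),
    (T - (m : ℤ))

/-!
Write `A_{k,i} = z^{k-1} P_{k,i}`. On the coefficient of `z^j` the recursion reads
`a_{k+1,i} = (j - k + 1) a_{k,i} - a_{k,i+1}`, so the claim amounts to the Pascal-type recursion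
`S(ℓ, k+1) = (T - k + 1) S(ℓ, k) + S(ℓ - 1, k)` for `S(ℓ, k) = ∑_{h ∈ H_{ℓ,k}} κ(T, k, h)`.
It comes from splitting the compositions `h` of `k + 1` according to their last part: if it is
larger than `1`, lowering it by one gives a composition of `k` and multiplies `κ` by `T - k + 1`;
if it equals `1`, dropping it gives a composition of `k` into one part fewer with the same `κ`.
-/

open Finset Polynomial

theorem prod_range_succ_sdiff {M : Type*} [CommMonoid M] (f : ℕ → M) {D : Finset ℕ} {m : ℕ}
    (hm : m ∉ D) : ∏ d ∈ range (m + 1) \ D, f d = f m * ∏ d ∈ range m \ D, f d := by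
  rw [range_add_one, insert_sdiff_of_notMem _ hm, prod_insert (by simp)]

section Compositions

variable {ℓ k m : ℕ} {h : Fin (ℓ + 1) → ℕ}

theorem mem_Hset_iff : h ∈ Hset ℓ k ↔ (∀ i, 0 < h i) ∧ ∑ i, h i = k := by
  simp only [Hset, mem_filter, Fintype.mem_piFinset, mem_Icc]
  constructor
  · rintro ⟨hb, hs⟩
    exact ⟨fun i => (hb i).1, hs⟩
  · rintro ⟨hpos, rfl⟩
    exact ⟨fun i => ⟨hpos i, single_le_sum (fun j _ => Nat.zero_le (h j)) (mem_univ i)⟩, rfl⟩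

theorem Hset_eq_empty_of_le (hk : k ≤ ℓ) : Hset ℓ k = ∅ := by
  refine eq_empty_of_forall_notMem fun h hh => ?_
  obtain ⟨hpos, hs⟩ := mem_Hset_iff.1 hh
  have : ∑ _i : Fin (ℓ + 1), 1 ≤ ∑ i, h i := sum_le_sum fun i _ => hpos i
  simp only [sum_const, card_univ, Fintype.card_fin, smul_eq_mul, mul_one] at this
  omega

theorem Hset_zero_one : Hset 0 1 = {fun _ => 1} := by
  decide

theorem sum_add_single_last (h : Fin (ℓ + 1) → ℕ) :
    ∑ i, (h + Pi.single (Fin.last ℓ) 1 : Fin (ℓ + 1) → ℕ) i = ∑ i, h i + 1 := by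
  simp [sum_add_distrib]

def partialSum (h : Fin (ℓ + 1) → ℕ) (i : ℕ) : ℕ :=
  ∑ j ∈ univ.filter (fun j : Fin (ℓ + 1) => (j : ℕ) ≤ i), h j

/-- The denominator factor `T + 1 - (h₀ + ⋯ + hᵢ)` of `κ(T, k, h)` is the numerator factor `T - d`
for `d = partialSum h i - 1`; these `d` are the factors omitted from `κ`. -/
def omittedFactors (h : Fin (ℓ + 1) → ℕ) : Finset ℕ :=
  (range ℓ).image fun i => partialSum h i - 1

theorem kappa_eq_prod_sdiff (T : ℤ) (k : ℕ) (h : Fin (ℓ + 1) → ℕ) :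
    kappa T k h = ∏ d ∈ range (k - 1) \ omittedFactors h, (T - d) :=
  rfl

theorem partialSum_add_single_last {i : ℕ} (hi : i < ℓ) :
    partialSum (h + Pi.single (Fin.last ℓ) 1) i = partialSum h i := by
  refine sum_congr rfl fun j hj => ?_
  have hj : j ≠ Fin.last ℓ := fun he => by simp only [he, mem_filter, Fin.val_last] at hj; omega
  simp [hj]

theorem omittedFactors_add_single_last :
    omittedFactors (h + Pi.single (Fin.last ℓ) 1) = omittedFactors h :=
  image_congr fun i hi => by
    simp only [partialSum_add_single_last (mem_range.1 hi)]

theorem partialSum_snoc (h : Fin (ℓ + 1) → ℕ) (x : ℕ) {i : ℕ} (hi : i ≤ ℓ) :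
    partialSum (Fin.snoc h x : Fin (ℓ + 2) → ℕ) i = partialSum h i := by
  simp only [partialSum, sum_filter, Fin.sum_univ_castSucc, Fin.val_castSucc, Fin.snoc_castSucc,
    Fin.val_last, Fin.snoc_last]
  simp [show ¬ ℓ + 1 ≤ i by omega]

theorem partialSum_last (h : Fin (ℓ + 1) → ℕ) : partialSum h ℓ = ∑ j, h j := by
  rw [partialSum, filter_true_of_mem fun j _ => Fin.is_le j]

theorem omittedFactors_snoc (h : Fin (ℓ + 1) → ℕ) (x : ℕ) :
    omittedFactors (Fin.snoc h x : Fin (ℓ + 2) → ℕ) = insert (∑ j, h j - 1) (omittedFactors h) := by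
  rw [omittedFactors, range_add_one, image_insert, partialSum_snoc h x le_rfl, partialSum_last]
  exact congrArg _ (image_congr fun i hi => by
    simp only [partialSum_snoc h x (mem_range.1 hi).le])

theorem partialSum_add_last_le {i : ℕ} (hi : i < ℓ) :
    partialSum h i + h (Fin.last ℓ) ≤ ∑ j, h j := by
  have hlast : Fin.last ℓ ∉ univ.filter (fun j : Fin (ℓ + 1) => (j : ℕ) ≤ i) := by simp; omega
  rw [partialSum, add_comm, ← sum_insert hlast]
  exact sum_le_sum_of_subset (subset_univ _)

theorem lt_of_mem_omittedFactors (hh : h ∈ Hset ℓ k) {d : ℕ} (hd : d ∈ omittedFactors h) :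
    d + h (Fin.last ℓ) < k := by
  obtain ⟨hpos, rfl⟩ := mem_Hset_iff.1 hh
  obtain ⟨i, hi, rfl⟩ := mem_image.1 hd
  have h0 : h 0 ≤ partialSum h i := single_le_sum (fun j _ => Nat.zero_le (h j)) (by simp)
  have := partialSum_add_last_le (h := h) (mem_range.1 hi)
  have := hpos 0
  omega

theorem kappa_add_single_last (hh : h ∈ Hset ℓ (m + 1)) (T : ℤ) :
    kappa T (m + 2) (h + Pi.single (Fin.last ℓ) 1) = (T - m) * kappa T (m + 1) h := by
  have hm : m ∉ omittedFactors h := fun hd => by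
    have := lt_of_mem_omittedFactors hh hd
    have := (mem_Hset_iff.1 hh).1 (Fin.last ℓ)
    omega
  rw [kappa_eq_prod_sdiff, kappa_eq_prod_sdiff, omittedFactors_add_single_last]
  exact prod_range_succ_sdiff _ hm

theorem kappa_snoc_one (hh : h ∈ Hset ℓ (m + 1)) (T : ℤ) :
    kappa T (m + 2) (Fin.snoc h 1 : Fin (ℓ + 2) → ℕ) = kappa T (m + 1) h := by
  rw [kappa_eq_prod_sdiff, kappa_eq_prod_sdiff, omittedFactors_snoc, (mem_Hset_iff.1 hh).2,
    Nat.add_sub_cancel, show m + 2 - 1 = m + 1 from rfl, range_add_one, insert_sdiff_insert,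
    sdiff_insert_of_notMem (by simp)]

end Compositions

theorem sum_kappa_last_ne_one (ℓ m : ℕ) (T : ℤ) :
    ∑ h ∈ (Hset ℓ (m + 2)).filter (fun h => h (Fin.last ℓ) ≠ 1), kappa T (m + 2) h
      = (T - m) * ∑ h ∈ Hset ℓ (m + 1), kappa T (m + 1) h := by
  set e : Fin (ℓ + 1) → ℕ := Pi.single (Fin.last ℓ) 1
  have he_le {h : Fin (ℓ + 1) → ℕ} (hl : 0 < h (Fin.last ℓ)) : e ≤ h := fun j => by
    rcases eq_or_ne j (Fin.last ℓ) with rfl | hj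
    · simpa [e, Nat.one_le_iff_ne_zero] using hl.ne'
    · simp [e, hj]
  rw [mul_sum]
  refine (sum_nbij' (fun h => h + e) (fun h => h - e) ?_ ?_ ?_ ?_ ?_).symm
  · intro h hh
    obtain ⟨hpos, hs⟩ := mem_Hset_iff.1 hh
    refine mem_filter.2 ⟨mem_Hset_iff.2 ⟨fun j => ?_, by rw [sum_add_single_last, hs]⟩, ?_⟩
    · exact Nat.add_pos_left (hpos j) _
    · have := hpos (Fin.last ℓ)
      simp [e]
      omega
  · intro h hh
    obtain ⟨⟨hpos, hs⟩, hl⟩ := And.imp_left mem_Hset_iff.1 (mem_filter.1 hh)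
    have hsplit : h - e + e = h := tsub_add_cancel_of_le (he_le (hpos _))
    refine mem_Hset_iff.2 ⟨fun j => ?_, ?_⟩
    · rcases eq_or_ne j (Fin.last ℓ) with rfl | hj
      · have := hpos (Fin.last ℓ)
        simp [e]
        omega
      · simpa [e, hj] using hpos j
    · have := sum_add_single_last (h - e)
      rw [hsplit] at this
      omega
  · intro h _
    exact add_tsub_cancel_right h e
  · intro h hh
    exact tsub_add_cancel_of_le (he_le ((mem_Hset_iff.1 (mem_filter.1 hh).1).1 _))
  · intro h hh
    exact (kappa_add_single_last hh T).symm

theorem sum_kappa_last_eq_one (ℓ m : ℕ) (T : ℤ) :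
    ∑ h ∈ (Hset (ℓ + 1) (m + 2)).filter (fun h => h (Fin.last (ℓ + 1)) = 1), kappa T (m + 2) h
      = ∑ h ∈ Hset ℓ (m + 1), kappa T (m + 1) h := by
  refine (sum_nbij' (fun h => Fin.snoc h 1) Fin.init ?_ ?_ ?_ ?_ ?_).symm
  · intro h hh
    obtain ⟨hpos, hs⟩ := mem_Hset_iff.1 hh
    refine mem_filter.2 ⟨mem_Hset_iff.2 ⟨fun j => ?_, ?_⟩, Fin.snoc_last _ _⟩
    · induction j using Fin.lastCases <;> simp [hpos]
    · simp [Fin.sum_univ_castSucc, hs]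
  · intro h hh
    obtain ⟨⟨hpos, hs⟩, hl⟩ := And.imp_left mem_Hset_iff.1 (mem_filter.1 hh)
    refine mem_Hset_iff.2 ⟨fun j => hpos _, ?_⟩
    rw [Fin.sum_univ_castSucc, hl] at hs
    simpa [Fin.init] using hs
  · intro h _
    exact Fin.init_snoc _ _
  · intro h hh
    conv_rhs => rw [← Fin.snoc_init_self h, (mem_filter.1 hh).2]
  · intro h hh
    exact (kappa_snoc_one hh T).symm

def kappaSum (ℓ k : ℕ) (T : ℤ) : ℤ :=
  ∑ h ∈ Hset ℓ k, kappa T k h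

theorem kappaSum_eq_zero_of_le {ℓ k : ℕ} (hk : k ≤ ℓ) (T : ℤ) : kappaSum ℓ k T = 0 := by
  rw [kappaSum, Hset_eq_empty_of_le hk, sum_empty]

theorem kappaSum_zero_one (T : ℤ) : kappaSum 0 1 T = 1 := by
  rw [kappaSum, Hset_zero_one, sum_singleton, kappa_eq_prod_sdiff]
  simp

theorem kappaSum_zero_add_two (m : ℕ) (T : ℤ) :
    kappaSum 0 (m + 2) T = (T - m) * kappaSum 0 (m + 1) T := by
  have hlast : (Hset 0 (m + 2)).filter (fun h => h (Fin.last 0) = 1) = ∅ :=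
    filter_eq_empty_iff.2 fun h hh hl => by
      have hs := (mem_Hset_iff.1 hh).2
      rw [Fin.sum_univ_one] at hs
      change h 0 = 1 at hl
      omega
  rw [kappaSum, ← sum_filter_add_sum_filter_not _ (fun h => h (Fin.last 0) = 1), hlast, sum_empty,
    zero_add, sum_kappa_last_ne_one, kappaSum]

theorem kappaSum_succ_add_two (ℓ m : ℕ) (T : ℤ) :
    kappaSum (ℓ + 1) (m + 2) T = (T - m) * kappaSum (ℓ + 1) (m + 1) T + kappaSum ℓ (m + 1) T := by
  rw [kappaSum, ← sum_filter_add_sum_filter_not _ (fun h => h (Fin.last (ℓ + 1)) = 1),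
    sum_kappa_last_eq_one, sum_kappa_last_ne_one, kappaSum, kappaSum, add_comm]

section CoefficientFormula

variable {R : Type*} [CommRing R]

theorem coeff_famA_add_two (g : ℕ → R[X]) (m i j : ℕ) :
    (famA g (m + 2) i).coeff j
      = ((j : R) - m) * (famA g (m + 1) i).coeff j - (famA g (m + 1) (i + 1)).coeff j := by
  rw [famA]
  cases j with
  | zero => simp
  | succ j => simp [coeff_derivative]; ring

theorem coeff_famA (g : ℕ → R[X]) : ∀ k i j, (famA g k i).coeff j
    = ∑ ℓ ∈ range k, (g (i + ℓ)).coeff j * (-1) ^ ℓ * (kappaSum ℓ k j : R)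
  | 0, i, j => by simp [famA]
  | 1, i, j => by simp [famA, kappaSum_zero_one]
  | m + 2, i, j => by
    have hlast : ∑ ℓ ∈ range (m + 1), (g (i + ℓ)).coeff j * (-1) ^ ℓ * (kappaSum ℓ (m + 1) j : R)
        = ∑ ℓ ∈ range (m + 2), (g (i + ℓ)).coeff j * (-1) ^ ℓ * (kappaSum ℓ (m + 1) j : R) := by
      rw [sum_range_succ _ (m + 1), kappaSum_eq_zero_of_le le_rfl, Int.cast_zero, mul_zero,
        add_zero]
    rw [coeff_famA_add_two, coeff_famA g (m + 1) i j, coeff_famA g (m + 1) (i + 1) j, hlast,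
      sum_range_succ', sum_range_succ' _ (m + 1), mul_add, mul_sum, add_sub_right_comm,
      ← sum_sub_distrib]
    simp only [kappaSum_succ_add_two, kappaSum_zero_add_two, Int.cast_add, Int.cast_mul, Int.cast_sub,
      Int.cast_natCast]
    congr 1
    · refine sum_congr rfl fun ℓ _ => ?_
      rw [add_right_comm i 1 ℓ, add_assoc]
      ring
    · ring

end CoefficientFormula

theorem sum_Icc_min_eq_sum_range {M : Type*} [AddCommMonoid M] (f : ℕ → M) {i : ℕ} (hi : 1 ≤ i)
    (a k : ℕ) :
    ∑ I ∈ Icc i (min a (i + k - 1)), f I = ∑ ℓ ∈ range k, if i + ℓ ≤ a then f (i + ℓ) else 0 := by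
  have hIcc : Icc i (min a (i + k - 1)) = (Ico i (i + k)).filter (· ≤ a) := by
    ext I
    simp only [mem_Icc, mem_filter, mem_Ico]
    omega
  rw [hIcc, sum_filter, sum_Ico_eq_sum_range, Nat.add_sub_cancel_left]

/-- The coefficient of `z^j` in `z^{k-1} P_{k,i}(z)` is the paper's coefficient of `z^t`,
`t = j - k + 1`. -/
theorem stmt11_general (a n : ℕ) (c : ℕ → ℕ → ℝ) (k : ℕ)
    (i : ℕ) (hi1 : 1 ≤ i) :
    famA (fun i' => if 1 ≤ i' ∧ i' ≤ a then
        ∑ j ∈ Finset.range (n + 1), Polynomial.C (c i' j) * Polynomial.X ^ j else 0) k i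
      = ∑ j ∈ Finset.range (n + 1), Polynomial.C
          (∑ I ∈ Finset.Icc i (min a (i + k - 1)),
            c I j * (-1 : ℝ) ^ (I - i) * ∑ h ∈ Hset (I - i) k, (kappa (j : ℤ) k h : ℝ))
          * Polynomial.X ^ j := by
  ext j
  simp only [coeff_famA, apply_ite (coeff · j), finsetSum_coeff, coeff_C_mul_X_pow, sum_ite_eq,
    coeff_zero]
  split_ifs
  · rw [sum_Icc_min_eq_sum_range _ hi1]
    refine sum_congr rfl fun ℓ _ => ?_
    by_cases hℓ : i + ℓ ≤ a
    · rw [Nat.add_sub_cancel_left]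
      simp [hℓ, kappaSum, show 1 ≤ i + ℓ by omega]
    · simp [hℓ]
  · simp

/-- Eq. (eqch3) of the paper: the explicit formula for `P_{k,i}`, stated for the
polynomial `z^{k-1} P_{k,i}(z)`: its coefficient of `z^j` (`0 ≤ j ≤ n`, i.e.
`j = t+k-1` with `1-k ≤ t ≤ n+1-k`) equals
`∑_{I=i}^{min(a,i+k-1)} c_{I,j} (-1)^{I-i} ∑_{h ∈ H_{I-i,k}} κ(j,k,h)`. -/
theorem stmt11 (a n : ℕ) (ha : 1 ≤ a) (c : ℕ → ℕ → ℝ) (k : ℕ) (hk : 1 ≤ k)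
    (i : ℕ) (hi1 : 1 ≤ i) (hia : i ≤ a) :
    famA (fun i' => if 1 ≤ i' ∧ i' ≤ a then
        ∑ j ∈ Finset.range (n + 1), Polynomial.C (c i' j) * Polynomial.X ^ j else 0) k i
      = ∑ j ∈ Finset.range (n + 1), Polynomial.C
          (∑ I ∈ Finset.Icc i (min a (i + k - 1)),
            c I j * (-1 : ℝ) ^ (I - i) * ∑ h ∈ Hset (I - i) k, (kappa (j : ℤ) k h : ℝ))
          * Polynomial.X ^ j :=
  stmt11_general a n c k i hi1
end

section
/- Let a ≥ 1, n ≥ 0, k ≥ 1 be integers, let T be an integer with 0 ≤ T ≤ n, let ℓ be an integer with 0 ≤ ℓ ≤ min(a−1, k−1), and let h ∈ H_{ℓ,k}. Then (d_k · Δ_{a, max(k,n)} / (k−1)!) · κ(T, k, h) is an integer. -/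
/-!
Put `K = k - 1` and let `S` be the set of `m` such that `T - m` is a denominator factor of `κ`,
so that `κ = ∏_{m < K, m ∉ S} (T - m)`. The factors `T - m` with `m ∈ S`, `m ≠ T` are at most
`a - 1` distinct nonzero integers in `[-N, N]` at mutual distance `≤ N` (`N = max(k, n)`), so
their product divides `Δ_{a,N}`; multiplied into `κ` they give a multiple of
`P = ∏_{m < K, m ≠ T} (T - m)`. If `T ≥ K`, then `K! ∣ P`. If `T < K`, then
`P = ± T! (K - 1 - T)!`, and `K! / (T! (K - 1 - T)!) = K · C(K - 1, T)` divides `lcm(1, …, K)`: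
by Kummer, its `p`-adic valuation counts the digits `i ≤ log_p K` with `p^i ∣ K` or with a carry
in the addition `T + (K - 1 - T)`, and these two sets of digits are disjoint.
-/

open Nat Finset

namespace Nat

theorem mod_add_mod_lt_of_dvd_add_add_one {q a b : ℕ} (hq : 0 < q) (h : q ∣ a + b + 1) :
    a % q + b % q < q := by
  have hdecomp : a + b + 1 = q * (a / q) + q * (b / q) + (a % q + b % q + 1) := by
    have := Nat.div_add_mod a q
    have := Nat.div_add_mod b q
    omega
  obtain ⟨t, ht⟩ : q ∣ a % q + b % q + 1 := by
    rw [hdecomp] at h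
    exact (Nat.dvd_add_right (dvd_add (dvd_mul_right _ _) (dvd_mul_right _ _))).1 h
  have := Nat.mod_lt a hq
  have := Nat.mod_lt b hq
  rcases t with _ | _ | t <;> nlinarith

theorem succ_mul_choose_dvd_lcmUpto {n k : ℕ} (hkn : k ≤ n) :
    (n + 1) * n.choose k ∣ lcmUpto (n + 1) := by
  rw [← factorization_prime_le_iff_dvd (Nat.mul_ne_zero n.succ_ne_zero (choose_pos hkn).ne')
    (lcmUpto_ne_zero _)]
  intro p hp
  have hlog : log p n < log p (n + 1) + 1 := Nat.lt_succ_of_le (log_mono_right n.le_succ)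
  rw [factorization_mul n.succ_ne_zero (choose_pos hkn).ne', Finsupp.add_apply,
    factorization_lcmUpto _ hp, factorization_choose hp hkn hlog,
    factorization_eq_card_pow_dvd_of_lt hp n.succ_pos (lt_pow_succ_log_self hp.one_lt _),
    ← card_union_of_disjoint (disjoint_filter.2 ?_)]
  · exact (card_le_card (union_subset (filter_subset _ _) (filter_subset _ _))).trans
      (card_Ico _ _).le
  intro i _ hdvd hcarry
  refine (mod_add_mod_lt_of_dvd_add_add_one (pow_pos hp.pos i) ?_).not_ge hcarry
  rwa [Nat.add_sub_cancel' hkn]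

theorem factorial_dvd_lcmUpto_mul_factorial_mul_factorial (b c : ℕ) :
    (b + c + 1)! ∣ lcmUpto (b + c + 1) * (b ! * c !) := by
  have hfac : (b + c + 1)! = (b + c + 1) * (b + c).choose c * (b ! * c !) := by
    rw [factorial_succ, ← add_choose_mul_factorial_mul_factorial b c]
    ring
  rw [hfac]
  exact mul_dvd_mul_right (succ_mul_choose_dvd_lcmUpto (le_add_left c b)) _

end Nat

theorem natAbs_prod_range_erase_sub (t c : ℕ) :
    (∏ m ∈ (range (t + c + 1)).erase t, ((t : ℤ) - m)).natAbs = t ! * c ! := by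
  have hsplit : (range (t + c + 1)).erase t = range t ∪ Ico (t + 1) (t + c + 1) := by
    ext m
    simp only [mem_erase, mem_range, mem_union, mem_Ico]
    omega
  have hdisj : Disjoint (range t) (Ico (t + 1) (t + c + 1)) := by
    rw [disjoint_left]
    intro m hm hm'
    simp only [mem_range, mem_Ico] at hm hm'
    omega
  rw [← Int.natAbsHom_apply, map_prod, hsplit, prod_union hdisj]
  congr 1
  · rw [← descFactorial_self, descFactorial_eq_prod_range]
    refine prod_congr rfl fun m hm => ?_
    simp only [mem_range] at hm
    simp only [Int.natAbsHom_apply]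
    omega
  · rw [prod_Ico_eq_prod_range, ← prod_range_add_one_eq_factorial,
      show t + c + 1 - (t + 1) = c by omega]
    refine prod_congr rfl fun m _ => ?_
    simp only [Int.natAbsHom_apply]
    omega

theorem factorial_dvd_prod_range_sub {K t : ℕ} (hKt : K ≤ t) :
    (K ! : ℤ) ∣ ∏ m ∈ range K, ((t : ℤ) - m) := by
  have hcast : ∏ m ∈ range K, ((t : ℤ) - m) = (t.descFactorial K : ℤ) := by
    rw [descFactorial_eq_prod_range, Nat.cast_prod]
    refine prod_congr rfl fun m hm => ?_
    rw [Nat.cast_sub (by simp only [mem_range] at hm; omega)]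
  rw [hcast]
  exact_mod_cast factorial_dvd_descFactorial t K

theorem factorial_dvd_lcmUpto_mul_prod_filter_sub (K : ℕ) {T : ℤ} (hT : 0 ≤ T) :
    (K ! : ℤ) ∣ lcmUpto K * ∏ m ∈ range K with T ≠ (m : ℕ), (T - m) := by
  lift T to ℕ using hT with t
  rcases lt_or_ge t K with htK | hKt
  · obtain ⟨c, rfl⟩ : ∃ c, K = t + c + 1 := ⟨K - t - 1, by omega⟩
    have hfilter :
        {m ∈ range (t + c + 1) | (t : ℤ) ≠ (m : ℕ)} = (range (t + c + 1)).erase t := by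
      ext m
      simp only [mem_filter, mem_erase, ne_eq, Nat.cast_inj]
      tauto
    rw [hfilter, Int.natCast_dvd, Int.natAbs_mul, Int.natAbs_natCast, natAbs_prod_range_erase_sub]
    exact factorial_dvd_lcmUpto_mul_factorial_mul_factorial t c
  · rw [filter_true_of_mem fun m hm => by simp only [mem_range] at hm; omega]
    exact dvd_mul_of_dvd_right (factorial_dvd_prod_range_sub hKt) _

theorem Finset.prod_filter_dvd_prod_sdiff_mul_prod_filter {ι M : Type*} [CommMonoid M]
    [DecidableEq ι] (s S : Finset ι) (p : ι → Prop) [DecidablePred p] (f : ι → M) :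
    ∏ i ∈ s with p i, f i ∣ (∏ i ∈ s \ S, f i) * ∏ i ∈ S with p i, f i := by
  rw [← prod_union (disjoint_sdiff_self_left.mono_right (filter_subset _ _))]
  refine prod_dvd_prod_of_subset _ _ _ fun i hi => ?_
  by_cases hiS : i ∈ S <;> simp_all

theorem prod_sub_dvd_Delta {a N : ℕ} {T : ℤ} (hT0 : 0 ≤ T) (hTN : T ≤ N) {M : Finset ℕ}
    (hMN : ∀ m ∈ M, m ≤ N) (hMa : #M ≤ a) (hTM : ∀ m ∈ M, T ≠ m) :
    (∏ m ∈ M, (T - m)) ∣ (Delta a N : ℤ) := by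
  rcases M.eq_empty_or_nonempty with rfl | hne
  · simp
  have hinj : Set.InjOn (fun m : ℕ => T - m) M := fun x _ y _ hxy => by simp_all
  rw [← prod_image (f := fun x => x) hinj, Int.dvd_natCast]
  refine Finset.dvd_lcm (f := fun s : Finset ℤ => (s.prod id).natAbs) (mem_filter.2 ⟨?_, ?_⟩)
  · refine mem_powerset.2 fun x hx => ?_
    obtain ⟨m, hm, rfl⟩ := mem_image.1 hx
    have := hMN m hm
    rw [mem_Icc]
    omega
  refine ⟨hne.image _, card_image_le.trans hMa, fun h0 => ?_, ?_⟩
  · obtain ⟨m, hm, hTm⟩ := mem_image.1 h0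
    exact hTM m hm (by omega)
  · simp only [mem_image]
    rintro _ ⟨x, -, rfl⟩ _ ⟨y, hy, rfl⟩
    have := hMN y hy
    omega

def kappaDenomIndices {ℓ : ℕ} (h : Fin (ℓ + 1) → ℕ) : Finset ℕ :=
  (range ℓ).image fun i => (∑ j ∈ univ.filter (fun j : Fin (ℓ + 1) => (j : ℕ) ≤ i), h j) - 1

theorem kappa_eq_prod_sdiff_kappaDenomIndices (T : ℤ) (k : ℕ) {ℓ : ℕ} (h : Fin (ℓ + 1) → ℕ) :
    kappa T k h = ∏ m ∈ range (k - 1) \ kappaDenomIndices h, (T - m) :=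
  rfl

theorem card_kappaDenomIndices_le {ℓ : ℕ} (h : Fin (ℓ + 1) → ℕ) : #(kappaDenomIndices h) ≤ ℓ :=
  card_image_le.trans (card_range ℓ).le

theorem kappaDenomIndices_subset_range {ℓ k : ℕ} {h : Fin (ℓ + 1) → ℕ} (hℓk : ℓ ≤ k - 1)
    (hh : h ∈ Hset ℓ k) : kappaDenomIndices h ⊆ range (k - 1) := by
  simp only [Hset, mem_filter, Fintype.mem_piFinset, mem_Icc] at hh
  obtain ⟨hpos, hsum⟩ := hh
  intro m hm
  obtain ⟨i, hi, rfl⟩ := mem_image.1 hm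
  rw [mem_range] at hi ⊢
  have hlast : Fin.last ℓ ∉ univ.filter (fun j : Fin (ℓ + 1) => (j : ℕ) ≤ i) := by
    simp only [mem_filter, mem_univ, true_and, Fin.val_last]
    omega
  have hpartial :
      ∑ j ∈ univ.filter (fun j : Fin (ℓ + 1) => (j : ℕ) ≤ i), h j + h (Fin.last ℓ) ≤ k := by
    rw [← hsum, add_comm, ← sum_insert hlast]
    exact sum_le_sum_of_subset (subset_univ _)
  have := (hpos (Fin.last ℓ)).1
  omega

theorem stmt13_general (a n k : ℕ) (T : ℤ) (hT0 : 0 ≤ T) (hTn : T ≤ (n : ℤ))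
    (ℓ : ℕ) (hℓa : ℓ ≤ a - 1) (hℓk : ℓ ≤ k - 1) (h : Fin (ℓ + 1) → ℕ) (hh : h ∈ Hset ℓ k) :
    (Nat.factorial (k - 1) : ℤ) ∣
      (((Finset.Icc 1 k).lcm id : ℕ) : ℤ) * (Delta a (max k n) : ℤ) * kappa T k h := by
  set S := kappaDenomIndices h
  have hS : S ⊆ range (k - 1) := kappaDenomIndices_subset_range hℓk hh
  have hΔ : ∏ m ∈ S with T ≠ (m : ℕ), (T - m) ∣ (Delta a (max k n) : ℤ) := by
    refine prod_sub_dvd_Delta hT0 (hTn.trans (by simp)) (fun m hm => ?_)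
      ((card_filter_le _ _).trans ((card_kappaDenomIndices_le h).trans (hℓa.trans (sub_le a 1))))
      (fun m hm => (mem_filter.1 hm).2)
    have := mem_range.1 (hS (mem_filter.1 hm).1)
    omega
  have hlcm : (lcmUpto (k - 1) : ℤ) ∣ ((Icc 1 k).lcm id : ℕ) :=
    Int.natCast_dvd_natCast.2 (lcm_mono (Icc_subset_Icc_right (sub_le k 1)))
  calc ((k - 1)! : ℤ)
      ∣ lcmUpto (k - 1) * ∏ m ∈ range (k - 1) with T ≠ (m : ℕ), (T - m) :=
        factorial_dvd_lcmUpto_mul_prod_filter_sub (k - 1) hT0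
    _ ∣ lcmUpto (k - 1) * (kappa T k h * ∏ m ∈ S with T ≠ (m : ℕ), (T - m)) :=
        by rw [kappa_eq_prod_sdiff_kappaDenomIndices]
           exact mul_dvd_mul_left _ (prod_filter_dvd_prod_sdiff_mul_prod_filter _ _ _ _)
    _ ∣ ((Icc 1 k).lcm id : ℕ) * (kappa T k h * Delta a (max k n)) :=
        mul_dvd_mul hlcm (mul_dvd_mul_left _ hΔ)
    _ = _ := by ring

/-- Eq. (eqch11) of the paper: `(d_k Δ_{a,max(k,n)} / (k-1)!) κ(T,k,h)` is an
integer, i.e. `(k-1)!` divides `d_k Δ_{a,max(k,n)} κ(T,k,h)`, where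
`d_k = lcm(1, …, k)`. -/
theorem stmt13 (a n k : ℕ) (ha : 1 ≤ a) (hk : 1 ≤ k) (T : ℤ) (hT0 : 0 ≤ T) (hTn : T ≤ (n : ℤ))
    (ℓ : ℕ) (hℓa : ℓ ≤ a - 1) (hℓk : ℓ ≤ k - 1) (h : Fin (ℓ + 1) → ℕ) (hh : h ∈ Hset ℓ k) :
    (Nat.factorial (k - 1) : ℤ) ∣
      (((Finset.Icc 1 k).lcm id : ℕ) : ℤ) * (Delta a (max k n) : ℤ) * kappa T k h :=
  stmt13_general a n k T hT0 hTn ℓ hℓa hℓk h hh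
end

section
/- Let a ≥ 1, n ≥ 2, h with 0 ≤ h ≤ a, and r ∈ ℚ with r ≥ 1 and rn ∈ ℕ. Let c_{i,j} ∈ ℤ (1 ≤ i ≤ a, 0 ≤ j ≤ n) be such that 𝔄₁ = 0 (equivalently F_n(t) = O(t^{−2}) as |t| → ∞). For 0 ≤ p ≤ h and z ∈ ℂ with |z| = 1, z ≠ 1, set S_{n,p}(z) = z^{rn} Σ_{t=rn+1}^∞ (F_n^{(p)}(t)·z^{−t} − F_n^{(p)}(−t)·z^{t}), a convergent series. Then for each p ∈ {0,…,h} there exists a polynomial V_p ∈ ℚ[X] of degree at most 2rn such that, for every z ∈ ℂ with |z| = 1 and z ≠ 1: S_{n,p}(z) = V_p(z) + Σ_{i=1}^a z^{rn}·P_i(z)·(−1)^p·(i)_p·( Li_{i+p}(1/z) − (−1)^{i+p}·Li_{i+p}(z) ). -/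
/-- The coefficient `𝔄_d` of `t^{-d}` in the expansion at infinity of
`F_n(t) = ∑_{i=1}^a ∑_{j=0}^n c_{i,j}/(t+j)^i`. -/
def frakA (a n : ℕ) (c : ℕ → ℕ → ℤ) (d : ℕ) : ℤ :=
  (-1) ^ d * ∑ i ∈ Finset.Icc 1 (min a d), ∑ j ∈ Finset.range (n + 1),
    (-1) ^ i * (Nat.choose (d - 1) (i - 1) : ℤ) * (j : ℤ) ^ (d - i) * c i j

/-- The `p`-th derivative `F_n^{(p)}(t) = ∑_{i,j} c_{i,j} (-1)^p (i)_p / (t+j)^{i+p}`. -/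
noncomputable def Fnp (a n p : ℕ) (c : ℕ → ℕ → ℤ) (t : ℂ) : ℂ :=
  ∑ i ∈ Finset.Icc 1 a, ∑ j ∈ Finset.range (n + 1),
    (c i j : ℂ) * (-1) ^ p * (ascPochhammer ℂ p).eval (i : ℂ) / (t + (j : ℂ)) ^ (i + p)

/-- The polylogarithm `Li_i(z) = ∑_{k=1}^∞ z^k / k^i`, defined as the limit of the
partial sums (so that it is also meaningful for conditionally convergent boundary
cases such as `i = 1`, `|z| = 1`, `z ≠ 1`). -/
noncomputable def polylog (i : ℕ) (z : ℂ) : ℂ :=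
  Filter.limUnder Filter.atTop (fun T : ℕ => ∑ k ∈ Finset.Icc 1 T, z ^ k / (k : ℂ) ^ i)

/-!
For `t > R ≥ n`, the term `c_{i,j} (-1)^p (i)_p (t + j)^{-(i+p)} z^{-t}` of `F_n^{(p)}(t) z^{-t}` is
`z^j` times the term of index `t + j` of the series of `Li_{i+p}(1/z)`, and the term coming from
`F_n^{(p)}(-t) z^t` is `(-1)^{i+p} z^j` times the term of index `t - j` of the series of
`Li_{i+p}(z)`. Summing over `t > R`, each polylogarithm loses only its first `R ± j` terms, and
these, multiplied by `z^R z^j`, form a rational polynomial of degree at most `2R`.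

Only the rearrangement needs care: for `i + p = 1` the polylogarithm series converge merely
conditionally (Dirichlet's test), whereas `𝔄₁ = ∑_j c_{1,j} = 0` makes `F_n^{(p)}(x) = O(|x|⁻²)`, so
the series `S_{n,p}` converges absolutely and can be evaluated through its partial sums.
-/

open Filter Finset Polynomial Topology Asymptotics Bornology

lemma sum_Icc_one_eq_sum_range {M : Type*} [AddCommMonoid M] (g : ℕ → M) (T : ℕ) :
    ∑ k ∈ Icc 1 T, g k = ∑ k ∈ range T, g (k + 1) := by
  induction T with
  | zero => simp
  | succ T ih => rw [sum_Icc_succ_top (by omega), sum_range_succ, ih]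

lemma norm_sum_range_pow_succ_le {w : ℂ} (hw : ‖w‖ ≤ 1) (hw1 : w ≠ 1) (m : ℕ) :
    ‖∑ k ∈ range m, w ^ (k + 1)‖ ≤ 2 / ‖w - 1‖ := by
  have hgeom : ∑ k ∈ range m, w ^ (k + 1) = w * ((w ^ m - 1) / (w - 1)) := by
    simp_rw [pow_succ', ← mul_sum, geom_sum_eq hw1]
  have hnum : ‖w ^ m - 1‖ ≤ 2 := calc
    ‖w ^ m - 1‖ ≤ ‖w‖ ^ m + 1 := by simpa using norm_sub_le (w ^ m) 1
    _ ≤ 2 := by linarith [pow_le_one₀ (norm_nonneg w) hw (n := m)]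
  rw [hgeom, norm_mul, norm_div]
  calc ‖w‖ * (‖w ^ m - 1‖ / ‖w - 1‖) ≤ 1 * (2 / ‖w - 1‖) := by gcongr
    _ = 2 / ‖w - 1‖ := one_mul _

lemma tendsto_polylog {s : ℕ} (hs : 1 ≤ s) {w : ℂ} (hw : ‖w‖ ≤ 1) (hw1 : w ≠ 1) :
    Tendsto (fun T : ℕ ↦ ∑ k ∈ Icc 1 T, w ^ k / (k : ℂ) ^ s) atTop (𝓝 (polylog s w)) := by
  have hanti : Antitone fun k : ℕ ↦ (((k : ℝ) + 1) ^ s)⁻¹ := fun k l hkl ↦ by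
    dsimp only
    gcongr
  have hzero : Tendsto (fun k : ℕ ↦ (((k : ℝ) + 1) ^ s)⁻¹) atTop (𝓝 0) := by
    have h := (tendsto_one_div_add_atTop_nhds_zero_nat (𝕜 := ℝ)).pow s
    rw [zero_pow (by omega)] at h
    exact h.congr fun k ↦ by rw [one_div, inv_pow]
  have hcauchy := hanti.cauchySeq_series_mul_of_tendsto_zero_of_bounded hzero
    (norm_sum_range_pow_succ_le hw hw1)
  have hpartial : (fun T ↦ ∑ k ∈ range T, (((k : ℝ) + 1) ^ s)⁻¹ • w ^ (k + 1)) =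
      fun T : ℕ ↦ ∑ k ∈ Icc 1 T, w ^ k / (k : ℂ) ^ s := by
    ext T
    rw [sum_Icc_one_eq_sum_range]
    refine sum_congr rfl fun k _ ↦ ?_
    rw [Complex.real_smul, div_eq_inv_mul]
    push_cast
    rfl
  rw [hpartial] at hcauchy
  obtain ⟨L, hL⟩ := cauchySeq_tendsto_of_complete hcauchy
  rwa [polylog, hL.limUnder_eq]

noncomputable def polylogPoly (s N : ℕ) : ℚ[X] :=
  ∑ k ∈ Icc 1 N, C ((k : ℚ) ^ s)⁻¹ * X ^ k

lemma natDegree_polylogPoly_le (s N : ℕ) : (polylogPoly s N).natDegree ≤ N :=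
  natDegree_sum_le_of_forall_le _ _ fun _ hk ↦
    (natDegree_C_mul_X_pow_le _ _).trans (mem_Icc.mp hk).2

lemma aeval_polylogPoly (s N : ℕ) (w : ℂ) :
    aeval w (polylogPoly s N) = ∑ k ∈ Icc 1 N, w ^ k / (k : ℂ) ^ s := by
  simp [polylogPoly, div_eq_inv_mul]

lemma aeval_reflect_eq_pow_mul {z : ℂ} (hz : z ≠ 0) {N : ℕ} {P : ℚ[X]} (hP : P.natDegree ≤ N) :
    aeval z (reflect N P) = z ^ N * aeval z⁻¹ P := by
  let _ := invertibleOfNonzero (inv_ne_zero hz)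
  have h := eval₂_reflect_mul_pow (algebraMap ℚ ℂ) z⁻¹ N P hP
  rw [invOf_eq_inv, inv_inv] at h
  rw [aeval_def, aeval_def, ← h, mul_left_comm, ← mul_pow, mul_inv_cancel₀ hz, one_pow, mul_one]

lemma tendsto_polylog_tail {s : ℕ} (hs : 1 ≤ s) {w : ℂ} (hw : ‖w‖ ≤ 1) (hw1 : w ≠ 1) (N : ℕ) :
    Tendsto (fun T ↦ ∑ t ∈ range T, w ^ (N + 1 + t) / ((N + 1 + t : ℕ) : ℂ) ^ s) atTop
      (𝓝 (polylog s w - aeval w (polylogPoly s N))) := by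
  have hsplit (T : ℕ) : ∑ k ∈ Icc 1 (N + T), w ^ k / (k : ℂ) ^ s =
      ∑ k ∈ Icc 1 N, w ^ k / (k : ℂ) ^ s +
        ∑ t ∈ range T, w ^ (N + 1 + t) / ((N + 1 + t : ℕ) : ℂ) ^ s := by
    simp_rw [sum_Icc_one_eq_sum_range, sum_range_add]
    refine congrArg _ (sum_congr rfl fun t _ ↦ ?_)
    rw [show N + t + 1 = N + 1 + t by omega]
  refine ((tendsto_polylog hs hw hw1).comp (tendsto_add_atTop_nat N) |>.sub_const
    (aeval w (polylogPoly s N))).congr fun T ↦ ?_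
  simp only [Function.comp_apply, add_comm T N, hsplit, aeval_polylogPoly, add_sub_cancel_left]

section Asymptotics

variable {𝕜 : Type*} [NormedField 𝕜]

lemma isBigO_inv_add_pow (u : 𝕜) (s : ℕ) :
    (fun x : 𝕜 ↦ ((x + u) ^ s)⁻¹) =O[cobounded 𝕜] fun x ↦ (‖x‖ ^ s)⁻¹ := by
  refine IsBigO.of_bound (2 ^ s) ?_
  filter_upwards [eventually_cobounded_le_norm (2 * ‖u‖ + 1)] with x hx
  have hhalf : ‖x‖ / 2 ≤ ‖x + u‖ := by
    have h := norm_sub_norm_le x (-u)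
    rw [sub_neg_eq_add, norm_neg] at h
    linarith
  have hpos : 0 < ‖x‖ / 2 := by linarith [norm_nonneg u]
  rw [norm_inv, norm_pow, norm_inv, norm_pow, norm_norm]
  calc (‖x + u‖ ^ s)⁻¹ ≤ ((‖x‖ / 2) ^ s)⁻¹ := by gcongr
    _ = 2 ^ s * (‖x‖ ^ s)⁻¹ := by rw [div_pow, inv_div, div_eq_mul_inv]

lemma isBigO_inv_pow_inv_sq {s : ℕ} (hs : 2 ≤ s) :
    (fun x : 𝕜 ↦ (‖x‖ ^ s)⁻¹) =O[cobounded 𝕜] fun x ↦ (‖x‖ ^ 2)⁻¹ := by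
  refine IsBigO.of_bound 1 ?_
  filter_upwards [eventually_cobounded_le_norm 1] with x hx
  rw [norm_inv, norm_inv, norm_pow, norm_pow, norm_norm, one_mul]
  gcongr

lemma isBigO_inv_sub_inv (u : 𝕜) :
    (fun x : 𝕜 ↦ (x + u)⁻¹ - x⁻¹) =O[cobounded 𝕜] fun x ↦ (‖x‖ ^ 2)⁻¹ := by
  have hprod : (fun x : 𝕜 ↦ -u * ((x + u) ^ 1)⁻¹ * (x ^ 1)⁻¹) =O[cobounded 𝕜]
      fun x ↦ (‖x‖ ^ 1)⁻¹ * (‖x‖ ^ 1)⁻¹ := by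
    simpa using ((isBigO_inv_add_pow u 1).const_mul_left (-u)).mul (isBigO_inv_add_pow 0 1)
  refine (hprod.congr' ?_ ?_)
  · filter_upwards [eventually_cobounded_le_norm (‖u‖ + 1)] with x hx
    have hx0 : x ≠ 0 := norm_pos_iff.mp (by linarith [norm_nonneg u])
    have hxu : x + u ≠ 0 := fun h ↦ by
      rw [add_eq_zero_iff_eq_neg.mp h, norm_neg] at hx; linarith
    field_simp
    ring
  · exact Eventually.of_forall fun x ↦ by ring

lemma isBigO_sum_div_add_of_sum_eq_zero {ι : Type*} (S : Finset ι) {b u : ι → 𝕜}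
    (hb : ∑ j ∈ S, b j = 0) :
    (fun x : 𝕜 ↦ ∑ j ∈ S, b j / (x + u j)) =O[cobounded 𝕜] fun x ↦ (‖x‖ ^ 2)⁻¹ := by
  have hsub (x : 𝕜) : ∑ j ∈ S, b j / (x + u j) = ∑ j ∈ S, b j * ((x + u j)⁻¹ - x⁻¹) := by
    simp_rw [mul_sub, sum_sub_distrib, ← sum_mul, hb, zero_mul, sub_zero, div_eq_mul_inv]
  simp_rw [hsub]
  exact IsBigO.fun_sum fun j _ ↦ (isBigO_inv_sub_inv (u j)).const_mul_left (b j)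

end Asymptotics

lemma frakA_one {a : ℕ} (ha : 1 ≤ a) (n : ℕ) (c : ℕ → ℕ → ℤ) :
    frakA a n c 1 = ∑ j ∈ range (n + 1), c 1 j := by
  simp [frakA, show min a 1 = 1 by omega]

lemma isBigO_Fnp {a n : ℕ} {c : ℕ → ℕ → ℤ} (hA1 : frakA a n c 1 = 0) (p : ℕ) :
    Fnp a n p c =O[cobounded ℂ] fun x ↦ (‖x‖ ^ 2)⁻¹ := by
  unfold Fnp
  refine IsBigO.fun_sum fun i hi ↦ ?_
  rcases le_or_gt 2 (i + p) with hs | hs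
  · refine IsBigO.fun_sum fun j _ ↦ ?_
    simp_rw [div_eq_mul_inv]
    exact ((isBigO_inv_add_pow _ _).trans (isBigO_inv_pow_inv_sq hs)).const_mul_left _
  · obtain ⟨rfl, rfl⟩ : i = 1 ∧ p = 0 := by have := (mem_Icc.mp hi).1; omega
    have hc : ∑ j ∈ range (n + 1), (c 1 j : ℂ) = 0 := by
      exact_mod_cast (frakA_one (mem_Icc.mp hi).2 n c).symm.trans hA1
    simpa using isBigO_sum_div_add_of_sum_eq_zero (range (n + 1)) (u := fun j ↦ (j : ℂ)) hc

lemma summable_mul_of_isBigO {f : ℂ → ℂ} (hf : f =O[cobounded ℂ] fun x ↦ (‖x‖ ^ 2)⁻¹)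
    {u w : ℕ → ℂ} (hu : ∀ t : ℕ, (t : ℝ) + 1 ≤ ‖u t‖) (hw : ∀ t, ‖w t‖ = 1) :
    Summable fun t ↦ f (u t) * w t := by
  have hsq : Summable fun t : ℕ ↦ (((t : ℝ) + 1) ^ 2)⁻¹ := by
    simpa using (summable_nat_add_iff 1).mpr (Real.summable_nat_pow_inv.mpr one_lt_two)
  have hu_tendsto : Tendsto u atTop (cobounded ℂ) :=
    tendsto_norm_atTop_iff_cobounded.mp <| tendsto_atTop_mono hu <|
      tendsto_atTop_add_const_right _ 1 tendsto_natCast_atTop_atTop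
  have hcmp : (fun t : ℕ ↦ (‖u t‖ ^ 2)⁻¹) =O[atTop] fun t : ℕ ↦ (((t : ℝ) + 1) ^ 2)⁻¹ :=
    isBigO_of_le _ fun t ↦ by
      rw [norm_inv, norm_inv, norm_pow, norm_pow, norm_norm, Real.norm_eq_abs]
      gcongr
      rw [abs_of_pos (by positivity)]
      exact hu t
  refine summable_of_isBigO_nat hsq (IsBigO.trans ?_ ((hf.comp_tendsto hu_tendsto).trans hcmp))
  exact isBigO_of_le _ fun t ↦ by simp [hw]

lemma zpow_div_sub_zpow_div_eq_polylog_terms {z : ℂ} (hz : z ≠ 0) {R j : ℕ} (hj : j ≤ R)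
    (s t : ℕ) :
    z ^ (-((R : ℤ) + 1 + t)) / (((R + 1 + t : ℕ) : ℂ) + j) ^ s
        - z ^ ((R : ℤ) + 1 + t) / (-((R + 1 + t : ℕ) : ℂ) + j) ^ s
      = z ^ j * ((z⁻¹) ^ (R + j + 1 + t) / ((R + j + 1 + t : ℕ) : ℂ) ^ s
          - (-1) ^ s * (z ^ (R - j + 1 + t) / ((R - j + 1 + t : ℕ) : ℂ) ^ s)) := by
  have hplus : ((R + 1 + t : ℕ) : ℂ) + j = ((R + j + 1 + t : ℕ) : ℂ) := by push_cast; ring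
  have hminus : -((R + 1 + t : ℕ) : ℂ) + j = -((R - j + 1 + t : ℕ) : ℂ) := by
    push_cast [Nat.cast_sub hj]; ring
  have hneg : z ^ (-((R : ℤ) + 1 + t)) = z ^ j * (z⁻¹) ^ (R + j + 1 + t) := by
    rw [show -((R : ℤ) + 1 + t) = -((R + 1 + t : ℕ) : ℤ) by push_cast; ring, zpow_neg,
      zpow_natCast, show R + j + 1 + t = j + (R + 1 + t) by omega, pow_add z⁻¹ j, ← mul_assoc,
      ← mul_pow, mul_inv_cancel₀ hz, one_pow, one_mul, inv_pow]
  have hpos : z ^ ((R : ℤ) + 1 + t) = z ^ j * z ^ (R - j + 1 + t) := by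
    rw [show (R : ℤ) + 1 + t = ((j + (R - j + 1 + t) : ℕ) : ℤ) by push_cast [hj]; ring,
      zpow_natCast, pow_add]
  have hsign : ((-1 : ℂ) ^ s)⁻¹ = (-1) ^ s := by rw [← inv_pow, inv_neg, inv_one]
  rw [hplus, hminus, hneg, hpos, neg_pow, div_mul_eq_div_div_swap, div_eq_mul_inv _ ((-1) ^ s),
    hsign]
  ring

lemma Fnp_series_term_eq (a n p : ℕ) (c : ℕ → ℕ → ℤ) {R : ℕ} (hnR : n ≤ R) {z : ℂ} (hz : z ≠ 0)
    (t : ℕ) :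
    Fnp a n p c ((R + 1 + t : ℕ) : ℂ) * z ^ (-((R : ℤ) + 1 + t))
        - Fnp a n p c (-((R + 1 + t : ℕ) : ℂ)) * z ^ ((R : ℤ) + 1 + t)
      = ∑ i ∈ Icc 1 a, ∑ j ∈ range (n + 1),
          (c i j : ℂ) * (-1) ^ p * (ascPochhammer ℂ p).eval (i : ℂ) * z ^ j *
            ((z⁻¹) ^ (R + j + 1 + t) / ((R + j + 1 + t : ℕ) : ℂ) ^ (i + p)
              - (-1) ^ (i + p) * (z ^ (R - j + 1 + t) / ((R - j + 1 + t : ℕ) : ℂ) ^ (i + p))) := by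
  simp only [Fnp, sum_mul, ← sum_sub_distrib]
  refine sum_congr rfl fun i _ ↦ sum_congr rfl fun j hj ↦ ?_
  have hjR : j ≤ R := by have := mem_range.mp hj; omega
  rw [mul_assoc _ (z ^ j), ← zpow_div_sub_zpow_div_eq_polylog_terms hz hjR]
  ring

lemma hasSum_Fnp_series {a n p R : ℕ} {c : ℕ → ℕ → ℤ} (hA1 : frakA a n c 1 = 0) (hnR : n ≤ R)
    {z : ℂ} (hz : ‖z‖ = 1) (hz1 : z ≠ 1) :
    HasSum (fun t : ℕ ↦ Fnp a n p c ((R + 1 + t : ℕ) : ℂ) * z ^ (-((R : ℤ) + 1 + t))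
        - Fnp a n p c (-((R + 1 + t : ℕ) : ℂ)) * z ^ ((R : ℤ) + 1 + t))
      (∑ i ∈ Icc 1 a, ∑ j ∈ range (n + 1),
        (c i j : ℂ) * (-1) ^ p * (ascPochhammer ℂ p).eval (i : ℂ) * z ^ j *
          ((polylog (i + p) z⁻¹ - aeval z⁻¹ (polylogPoly (i + p) (R + j)))
            - (-1) ^ (i + p) * (polylog (i + p) z - aeval z (polylogPoly (i + p) (R - j))))) := by
  have hz0 : z ≠ 0 := norm_ne_zero_iff.mp (by rw [hz]; exact one_ne_zero)
  have hzi : ‖z⁻¹‖ ≤ 1 := by rw [norm_inv, hz, inv_one]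
  have hzi1 : z⁻¹ ≠ 1 := inv_ne_one.mpr hz1
  have hmod (t : ℕ) : (t : ℝ) + 1 ≤ ‖((R + 1 + t : ℕ) : ℂ)‖ := by
    rw [Complex.norm_natCast]; push_cast; linarith [(R.cast_nonneg : (0 : ℝ) ≤ R)]
  have hunit (k : ℤ) : ‖z ^ k‖ = 1 := by rw [norm_zpow, hz, one_zpow]
  rw [Summable.hasSum_iff_tendsto_nat <|
    (summable_mul_of_isBigO (isBigO_Fnp hA1 p) hmod fun t ↦ hunit _).sub
      (summable_mul_of_isBigO (isBigO_Fnp hA1 p) (fun t ↦ (hmod t).trans_eq (norm_neg _).symm)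
        fun t ↦ hunit _)]
  simp only [Fnp_series_term_eq a n p c hnR hz0]
  conv in ∑ t ∈ range _, _ => rw [sum_comm]; enter [2, i]; rw [sum_comm]
  simp only [← mul_sum, sum_sub_distrib]
  refine tendsto_finsetSum _ fun i hi ↦ tendsto_finsetSum _ fun j _ ↦ ?_
  have hs : 1 ≤ i + p := by have := (mem_Icc.mp hi).1; omega
  exact ((tendsto_polylog_tail hs hzi hzi1 (R + j)).sub
    ((tendsto_polylog_tail hs hz.le hz1 (R - j)).const_mul _)).const_mul _

lemma ratCast_ascPochhammer_eval (p i : ℕ) :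
    (((ascPochhammer ℚ p).eval (i : ℚ) : ℚ) : ℂ) = (ascPochhammer ℂ p).eval (i : ℂ) := by
  rw [← ascPochhammer_map (algebraMap ℚ ℂ), eval_natCast_map, eq_ratCast]

/-- The polynomial `V_p`: the terms `k ≤ R ± j` that the shifted series of `Li_{i+p}(z^{±1})`
lack, multiplied by `z^R z^j`. -/
noncomputable def polyPartV (a n p R : ℕ) (c : ℕ → ℕ → ℤ) : ℚ[X] :=
  ∑ i ∈ Icc 1 a, ∑ j ∈ range (n + 1),
    C ((c i j : ℚ) * (-1) ^ p * (ascPochhammer ℚ p).eval (i : ℚ)) *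
      (C ((-1) ^ (i + p)) * X ^ (R + j) * polylogPoly (i + p) (R - j)
        - reflect (R + j) (polylogPoly (i + p) (R + j)))

lemma natDegree_polyPartV_le {a n p R : ℕ} (c : ℕ → ℕ → ℤ) (hnR : n ≤ R) :
    (polyPartV a n p R c).natDegree ≤ 2 * R := by
  refine natDegree_sum_le_of_forall_le _ _ fun i _ ↦
    natDegree_sum_le_of_forall_le _ _ fun j hj ↦ ?_
  have hjR : j ≤ R := by have := mem_range.mp hj; omega
  refine (natDegree_C_mul_le _ _).trans <| (natDegree_sub_le _ _).trans <| max_le ?_ ?_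
  · calc _ ≤ (C ((-1 : ℚ) ^ (i + p)) * X ^ (R + j)).natDegree
          + (polylogPoly (i + p) (R - j)).natDegree := natDegree_mul_le
      _ ≤ (R + j) + (R - j) := add_le_add (natDegree_C_mul_X_pow_le _ _)
          (natDegree_polylogPoly_le _ _)
      _ = 2 * R := by omega
  · exact natDegree_reflect_le.trans <| (max_le le_rfl (natDegree_polylogPoly_le _ _)).trans
      (by omega)

lemma aeval_polyPartV (a n p R : ℕ) (c : ℕ → ℕ → ℤ) {z : ℂ} (hz : z ≠ 0) :
    aeval z (polyPartV a n p R c) = ∑ i ∈ Icc 1 a, ∑ j ∈ range (n + 1),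
      (c i j : ℂ) * (-1) ^ p * (ascPochhammer ℂ p).eval (i : ℂ) *
        ((-1) ^ (i + p) * z ^ (R + j) * aeval z (polylogPoly (i + p) (R - j))
          - z ^ (R + j) * aeval z⁻¹ (polylogPoly (i + p) (R + j))) := by
  simp only [polyPartV, map_sum, map_mul, map_sub, aeval_C, aeval_X_pow, eq_ratCast,
    aeval_reflect_eq_pow_mul hz (natDegree_polylogPoly_le _ _)]
  push_cast [ratCast_ascPochhammer_eval]
  rfl

theorem stmt14_general (a n : ℕ)
    (r : ℚ) (hr : 1 ≤ r) (R : ℕ) (hR : (r * n : ℚ) = (R : ℚ))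
    (c : ℕ → ℕ → ℤ) (hA1 : frakA a n c 1 = 0)
    (p : ℕ) :
    ∃ V : Polynomial ℚ, V.natDegree ≤ 2 * R ∧
      ∀ z : ℂ, ‖z‖ = 1 → z ≠ 1 →
        z ^ R * ∑' t : ℕ,
            (Fnp a n p c ((R + 1 + t : ℕ) : ℂ) * z ^ (-((R : ℤ) + 1 + t))
              - Fnp a n p c (-((R + 1 + t : ℕ) : ℂ)) * z ^ ((R : ℤ) + 1 + t))
          = Polynomial.aeval z V
            + ∑ i ∈ Finset.Icc 1 a, z ^ R *
                (∑ j ∈ Finset.range (n + 1), (c i j : ℂ) * z ^ j) * (-1) ^ p *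
                ((ascPochhammer ℂ p).eval (i : ℂ)) *
                (polylog (i + p) z⁻¹ - (-1) ^ (i + p) * polylog (i + p) z) := by
  have hnR : n ≤ R := by
    have : (n : ℚ) ≤ R := by rw [← hR]; nlinarith [(n.cast_nonneg : (0 : ℚ) ≤ n)]
    exact_mod_cast this
  refine ⟨polyPartV a n p R c, natDegree_polyPartV_le c hnR, fun z hz hz1 ↦ ?_⟩
  have hz0 : z ≠ 0 := norm_ne_zero_iff.mp (by rw [hz]; exact one_ne_zero)
  rw [(hasSum_Fnp_series hA1 hnR hz hz1).tsum_eq, aeval_polyPartV a n p R c hz0]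
  simp only [mul_sum, sum_mul, ← sum_add_distrib]
  refine sum_congr rfl fun i _ ↦ sum_congr rfl fun j _ ↦ ?_
  ring

/-- Lemma 5 of the paper (expansion of `S_{n,p}` in polylogarithms): there is a
polynomial `V_p ∈ ℚ[X]` of degree ≤ `2rn` with
`S_{n,p}(z) = V_p(z) + ∑_{i=1}^a z^{rn} P_i(z) (-1)^p (i)_p (Li_{i+p}(1/z) - (-1)^{i+p} Li_{i+p}(z))`
for `|z| = 1`, `z ≠ 1`. Here `R = rn ∈ ℕ` and
`S_{n,p}(z) = z^{rn} ∑_{t=rn+1}^∞ (F_n^{(p)}(t) z^{-t} - F_n^{(p)}(-t) z^t)`. -/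
theorem stmt14 (a n hh : ℕ) (ha : 1 ≤ a) (hn : 2 ≤ n) (hha : hh ≤ a)
    (r : ℚ) (hr : 1 ≤ r) (R : ℕ) (hR : (r * n : ℚ) = (R : ℚ))
    (c : ℕ → ℕ → ℤ) (hA1 : frakA a n c 1 = 0)
    (p : ℕ) (hp : p ≤ hh) :
    ∃ V : Polynomial ℚ, V.natDegree ≤ 2 * R ∧
      ∀ z : ℂ, ‖z‖ = 1 → z ≠ 1 →
        z ^ R * ∑' t : ℕ,
            (Fnp a n p c ((R + 1 + t : ℕ) : ℂ) * z ^ (-((R : ℤ) + 1 + t))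
              - Fnp a n p c (-((R + 1 + t : ℕ) : ℂ)) * z ^ ((R : ℤ) + 1 + t))
          = Polynomial.aeval z V
            + ∑ i ∈ Finset.Icc 1 a, z ^ R *
                (∑ j ∈ Finset.range (n + 1), (c i j : ℂ) * z ^ j) * (-1) ^ p *
                ((ascPochhammer ℂ p).eval (i : ℂ)) *
                (polylog (i + p) z⁻¹ - (-1) ^ (i + p) * polylog (i + p) z) :=
  stmt14_general a n r hr R hR c hA1 p
end

section
/- Let b ≥ 1 and m ≥ 0 be integers, and let P₁, …, P_b ∈ ℂ[z] be polynomials with P_b not identically zero. Let D be a nonempty open disk contained in ℂ ∖ {0} on which a holomorphic branch of log is chosen, and for 1 ≤ β ≤ b define the holomorphic function h̃_β on D by h̃_β(z) = Σ_{i=β}^{b} z^m·P_i(z)·(−log z)^{i−β}/(i−β)!. Then the functions h̃₁, …, h̃_b are linearly independent over ℂ. -/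
/-!
Substituting `j = i - β` writes `∑ β, μ β * h̃_β` as `∑_{j < b} c_j(z) L(z)^j` with
`c_j = (-1)^j / j! * z^m * ∑ β, μ β * P_{β+j}`. This system is triangular in `μ` with diagonal
`P_b ≠ 0`, so it suffices that `L` is transcendental over `ℂ[z]`: a vanishing `∑_{j ≤ N} c_j L^j`
has all `c_j = 0`. Applying `θ = z d/dz` (with `θL = 1`) and eliminating `L^N` gives a shorter
relation, so by induction its coefficients vanish; the one of `L^(N-1)` reads
`N c_N² = -z W(c_N, c_{N-1})`, i.e. `(c_{N-1}/c_N)' = -N/z`, which a degree count in the Wronskian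
rules out: `log` has no rational antiderivative.
-/

open Polynomial Finset

namespace Polynomial

variable {R : Type*} [CommRing R]

theorem coeff_wronskian_natDegree_add_sub_one {c d : R[X]} (hc : 0 < c.natDegree)
    (hd : 0 < d.natDegree) :
    (wronskian c d).coeff (c.natDegree + d.natDegree - 1) =
      ((d.natDegree : R) - c.natDegree) * c.leadingCoeff * d.leadingCoeff := by
  set p := c.natDegree
  set q := d.natDegree
  have hcd' : (c * derivative d).coeff (p + (q - 1)) = c.coeff p * (d.coeff q * q) := by
    rw [coeff_mul_add_eq_of_natDegree_le le_rfl (natDegree_derivative_le d), coeff_derivative,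
      Nat.sub_add_cancel hd, Nat.cast_sub hd]
    push_cast; ring
  have hc'd : (derivative c * d).coeff ((p - 1) + q) = c.coeff p * p * d.coeff q := by
    rw [coeff_mul_add_eq_of_natDegree_le (natDegree_derivative_le c) le_rfl, coeff_derivative,
      Nat.sub_add_cancel hc, Nat.cast_sub hc]
    push_cast; ring
  rw [show p + (q - 1) = p + q - 1 by omega] at hcd'
  rw [show p - 1 + q = p + q - 1 by omega] at hc'd
  rw [wronskian, coeff_sub, hcd', hc'd, leadingCoeff, leadingCoeff]
  ring

/-- The coefficients of `c N * θF - θ(c N) * F`, where `F = ∑_{j ≤ N} c j * L ^ j` and `θ = z d/dz`;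
its `L ^ N` terms cancel because `θL = 1`. -/
noncomputable def logReduction (c : ℕ → R[X]) (N j : ℕ) : R[X] :=
  X * (c N * derivative (c j) - derivative (c N) * c j) + C ((j : R) + 1) * (c N * c (j + 1))

theorem sum_eval_logReduction_mul_pow (c : ℕ → R[X]) (N : ℕ) (z w : R) :
    ∑ j ∈ range N, (logReduction c N j).eval z * w ^ j =
      (c N).eval z * ∑ j ∈ range (N + 1),
          (z * (derivative (c j)).eval z * w ^ j + j * (c j).eval z * w ^ (j - 1)) -
        z * (derivative (c N)).eval z * ∑ j ∈ range (N + 1), (c j).eval z * w ^ j := by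
  have hshift : ∑ j ∈ range (N + 1), (j : R) * (c j).eval z * w ^ (j - 1) =
      ∑ j ∈ range N, ((j : R) + 1) * (c (j + 1)).eval z * w ^ j := by
    rw [sum_range_succ']; simp
  have hterm : ∀ j ∈ range N, (logReduction c N j).eval z * w ^ j =
      (c N).eval z * (z * (derivative (c j)).eval z * w ^ j) +
        (c N).eval z * (((j : R) + 1) * (c (j + 1)).eval z * w ^ j) -
        z * (derivative (c N)).eval z * ((c j).eval z * w ^ j) := by
    intro j _
    simp only [logReduction, eval_add, eval_mul, eval_sub, eval_X, eval_C]
    ring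
  rw [sum_congr rfl hterm, sum_sub_distrib, sum_add_distrib, ← mul_sum, ← mul_sum, ← mul_sum,
    sum_add_distrib, hshift, sum_range_succ, sum_range_succ (fun j => (c j).eval z * w ^ j)]
  ring

theorem logReduction_succ_self (c : ℕ → R[X]) (n : ℕ) :
    logReduction c (n + 1) n =
      X * wronskian (c (n + 1)) (c n) + C ((n : R) + 1) * c (n + 1) ^ 2 := by
  rw [logReduction, wronskian]; ring

variable [IsDomain R] [CharZero R]

theorem eq_zero_of_X_mul_wronskian_add_C_mul_sq_eq_zero {n : R} (hn : n ≠ 0) {c d : R[X]}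
    (h : X * wronskian c d + C n * c ^ 2 = 0) : c = 0 := by
  by_contra hc
  have hW : wronskian c d ≠ 0 := by
    intro hW
    simp [hW, hn, hc] at h
  have hd : d ≠ 0 := by
    rintro rfl
    exact hW (wronskian_zero_right c)
  have hdeg : (wronskian c d).natDegree + 1 = 2 * c.natDegree := by
    rw [← natDegree_X_mul hW, eq_neg_of_add_eq_zero_left h, natDegree_neg, natDegree_C_mul hn,
      natDegree_pow, mul_comm]
  have hlt := natDegree_wronskian_lt_add hW
  have hcoeff := coeff_wronskian_natDegree_add_sub_one (c := c) (d := d) (by omega) (by omega)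
  have hpq : c.natDegree = d.natDegree := by
    by_contra hpq
    have hne : (wronskian c d).coeff (c.natDegree + d.natDegree - 1) ≠ 0 := by
      rw [hcoeff]
      refine mul_ne_zero (mul_ne_zero (sub_ne_zero.mpr ?_) (leadingCoeff_ne_zero.mpr hc))
        (leadingCoeff_ne_zero.mpr hd)
      exact_mod_cast Ne.symm hpq
    have := le_natDegree_of_ne_zero hne
    omega
  apply hW
  rw [← leadingCoeff_eq_zero, leadingCoeff,
    show (wronskian c d).natDegree = c.natDegree + d.natDegree - 1 by omega, hcoeff, hpq, sub_self,
    zero_mul, zero_mul]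

end Polynomial

theorem Polynomial.eq_zero_of_forall_mem_eval_eq_zero {𝕜 : Type*} [NontriviallyNormedField 𝕜]
    {U : Set 𝕜} (hU : IsOpen U) (hne : U.Nonempty) {p : 𝕜[X]} (h : ∀ z ∈ U, p.eval z = 0) :
    p = 0 := by
  obtain ⟨z, hz⟩ := hne
  exact p.eq_zero_of_infinite_isRoot ((infinite_of_mem_nhds z (hU.mem_nhds hz)).mono h)

section

variable {U : Set ℂ} {L : ℂ → ℂ}

theorem hasDerivAt_of_forall_exp_eq (hU : IsOpen U) (hL : ContinuousOn L U)
    (hexp : ∀ z ∈ U, Complex.exp (L z) = z) {z : ℂ} (hz : z ∈ U) : HasDerivAt L z⁻¹ z := by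
  have := (Complex.hasDerivAt_exp (L z)).of_local_left_inverse (hL.continuousAt (hU.mem_nhds hz))
    (Complex.exp_ne_zero _) (Filter.eventually_of_mem (hU.mem_nhds hz) hexp)
  rwa [hexp z hz] at this

theorem sum_eval_logReduction_mul_pow_eq_zero (hU : IsOpen U) (hL : ContinuousOn L U)
    (hexp : ∀ z ∈ U, Complex.exp (L z) = z) {N : ℕ} {c : ℕ → ℂ[X]}
    (h : ∀ z ∈ U, ∑ j ∈ range (N + 1), (c j).eval z * L z ^ j = 0) :
    ∀ z ∈ U, ∑ j ∈ range N, (logReduction c N j).eval z * L z ^ j = 0 := by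
  intro z hz
  have hderiv : HasDerivAt (fun w => ∑ j ∈ range (N + 1), (c j).eval w * L w ^ j)
      (∑ j ∈ range (N + 1),
        ((derivative (c j)).eval z * L z ^ j + (c j).eval z * (j * L z ^ (j - 1) * z⁻¹))) z :=
    HasDerivAt.fun_sum fun j _ =>
      ((c j).hasDerivAt z).mul ((hasDerivAt_of_forall_exp_eq hU hL hexp hz).pow j)
  have hderiv_eq_zero := hderiv.unique <| (hasDerivAt_const z (0 : ℂ)).congr_of_eventuallyEq
    (Filter.eventually_of_mem (hU.mem_nhds hz) h)
  have hz0 : z ≠ 0 := hexp z hz ▸ Complex.exp_ne_zero _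
  have hmul : ∑ j ∈ range (N + 1),
      (z * (derivative (c j)).eval z * L z ^ j + j * (c j).eval z * L z ^ (j - 1)) =
      z * ∑ j ∈ range (N + 1),
        ((derivative (c j)).eval z * L z ^ j + (c j).eval z * (j * L z ^ (j - 1) * z⁻¹)) := by
    rw [mul_sum]
    refine sum_congr rfl fun j _ => ?_
    field_simp
  rw [sum_eval_logReduction_mul_pow, h z hz, hmul, hderiv_eq_zero, mul_zero, mul_zero, mul_zero,
    sub_zero]

theorem eq_zero_of_sum_eval_mul_pow_eq_zero (hU : IsOpen U) (hne : U.Nonempty)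
    (hL : ContinuousOn L U) (hexp : ∀ z ∈ U, Complex.exp (L z) = z) {N : ℕ} {c : ℕ → ℂ[X]}
    (h : ∀ z ∈ U, ∑ j ∈ range N, (c j).eval z * L z ^ j = 0) : ∀ j < N, c j = 0 := by
  induction N generalizing c with
  | zero => simp
  | succ N ih =>
    have hreduced := sum_eval_logReduction_mul_pow_eq_zero hU hL hexp h
    have hcN : c N = 0 := by
      cases N with
      | zero => exact eq_zero_of_forall_mem_eval_eq_zero hU hne (by simpa using h)
      | succ n =>
        refine eq_zero_of_X_mul_wronskian_add_C_mul_sq_eq_zero (d := c n) n.cast_add_one_ne_zero ?_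
        rw [← logReduction_succ_self]
        exact ih hreduced n n.lt_add_one
    have h' : ∀ z ∈ U, ∑ j ∈ range N, (c j).eval z * L z ^ j = 0 := by
      simpa [sum_range_succ, hcN] using h
    intro j hj
    rcases Nat.lt_succ_iff_lt_or_eq.mp hj with hj | rfl
    exacts [ih h' j hj, hcN]

end

theorem Finset.sum_Icc_sum_Icc_eq_sum_range_sum_Icc {M : Type*} [AddCommMonoid M] (b : ℕ)
    (f : ℕ → ℕ → M) :
    ∑ β ∈ Icc 1 b, ∑ i ∈ Icc β b, f β i = ∑ j ∈ range b, ∑ β ∈ Icc 1 (b - j), f β (β + j) := by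
  simp_rw [← Ico_add_one_right_eq_Icc, sum_Ico_eq_sum_range]
  exact sum_comm' fun β j => by simp only [mem_range]; omega

theorem eq_zero_of_forall_sum_Icc_smul_eq_zero {R M : Type*} [Semiring R] [IsCancelMulZero R]
    [AddCommMonoid M] [Module R M] [Module.IsTorsionFree R M] {b : ℕ} {P : ℕ → M} (hPb : P b ≠ 0)
    {μ : ℕ → R}
    (h : ∀ j < b, ∑ β ∈ Icc 1 (b - j), μ β • P (β + j) = 0) : ∀ β ∈ Icc 1 b, μ β = 0 := by
  intro β
  induction β using Nat.strong_induction_on with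
  | _ β ih =>
    intro hβ
    obtain ⟨hβ1, hβb⟩ := mem_Icc.mp hβ
    have hsum := h (b - β) (by omega)
    rw [Nat.sub_sub_self hβb, sum_eq_single_of_mem β (mem_Icc.mpr ⟨hβ1, le_rfl⟩)
      fun β' hβ' hne => by
        rw [ih β' (by grind) (mem_Icc.mpr (by grind)), zero_smul],
      Nat.add_sub_cancel' hβb] at hsum
    exact (smul_eq_zero_iff_left hPb).mp hsum

theorem stmt18_general (b m : ℕ) (P : ℕ → Polynomial ℂ) (hPb : P b ≠ 0)
    (z₁ : ℂ) (ρ : ℝ) (hρ : 0 < ρ)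
    (L : ℂ → ℂ) (hL : DifferentiableOn ℂ L (Metric.ball z₁ ρ))
    (hLlog : ∀ z ∈ Metric.ball z₁ ρ, Complex.exp (L z) = z)
    (μ : ℕ → ℂ)
    (hsum : ∀ z ∈ Metric.ball z₁ ρ,
      ∑ β ∈ Finset.Icc 1 b, μ β *
        ∑ i ∈ Finset.Icc β b,
          z ^ m * (P i).eval z * (-L z) ^ (i - β) / (Nat.factorial (i - β)) = 0) :
    ∀ β ∈ Finset.Icc 1 b, μ β = 0 := by
  set c : ℕ → ℂ[X] := fun j =>
    C ((-1) ^ j / j.factorial : ℂ) * X ^ m * ∑ β ∈ Icc 1 (b - j), μ β • P (β + j) with hc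
  have hcL : ∀ z ∈ Metric.ball z₁ ρ, ∑ j ∈ range b, (c j).eval z * L z ^ j = 0 := by
    intro z hz
    rw [← hsum z hz]
    simp_rw [mul_sum]
    rw [sum_Icc_sum_Icc_eq_sum_range_sum_Icc]
    refine sum_congr rfl fun j _ => ?_
    simp only [hc, eval_mul, eval_C, eval_pow, eval_X, eval_finsetSum, eval_smul, smul_eq_mul,
      mul_sum, sum_mul, Nat.add_sub_cancel_left]
    refine sum_congr rfl fun β _ => ?_
    rw [neg_pow]
    ring
  have hc0 : ∀ j < b, c j = 0 := eq_zero_of_sum_eval_mul_pow_eq_zero Metric.isOpen_ball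
    (Metric.nonempty_ball.mpr hρ) hL.continuousOn hLlog hcL
  refine eq_zero_of_forall_sum_Icc_smul_eq_zero hPb fun j hj => ?_
  refine (mul_eq_zero.mp (hc0 j hj)).resolve_left (mul_ne_zero ?_ (pow_ne_zero m X_ne_zero))
  exact C_ne_zero.mpr (div_ne_zero (pow_ne_zero j (neg_ne_zero.mpr one_ne_zero))
    (Nat.cast_ne_zero.mpr j.factorial_ne_zero))

/-- Step 5 of the proof of Proposition 2: the functions
`h̃_β(z) = ∑_{i=β}^b z^m P_i(z) (-log z)^{i-β}/(i-β)!` (for `1 ≤ β ≤ b`, with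
`P_b ≠ 0`) are linearly independent over `ℂ` as functions on an open disk
`D ⊆ ℂ ∖ {0}` equipped with a holomorphic branch `L` of the logarithm. -/
theorem stmt18 (b m : ℕ) (hb : 1 ≤ b) (P : ℕ → Polynomial ℂ) (hPb : P b ≠ 0)
    (z₁ : ℂ) (ρ : ℝ) (hρ : 0 < ρ) (hD : Metric.ball z₁ ρ ⊆ ({0}ᶜ : Set ℂ))
    (L : ℂ → ℂ) (hL : DifferentiableOn ℂ L (Metric.ball z₁ ρ))
    (hLlog : ∀ z ∈ Metric.ball z₁ ρ, Complex.exp (L z) = z)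
    (μ : ℕ → ℂ)
    (hsum : ∀ z ∈ Metric.ball z₁ ρ,
      ∑ β ∈ Finset.Icc 1 b, μ β *
        ∑ i ∈ Finset.Icc β b,
          z ^ m * (P i).eval z * (-L z) ^ (i - β) / (Nat.factorial (i - β)) = 0) :
    ∀ β ∈ Finset.Icc 1 b, μ β = 0 :=
  stmt18_general b m P hPb z₁ ρ hρ L hL hLlog μ hsum
end

section
/- Let R, k, W be positive integers with R < k−1 and k+1 ≤ W. Then Σ_{t=R+1}^∞ C(t−R+k−2, k−1)·(R/t)^W ≤ R²·e^{k−1}·π²/6. -/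
/-!
With `m = k - 1`, bound each term separately. Since `C(s+m, m) ≤ (s+m)^m / m!` and
`(s+m) R ≤ m (R+1+s)` (as `R ≤ m`), the first `m` factors of `(R/(R+1+s))^W` bring the binomial
coefficient down to `m^m / m! ≤ e^m`; two more factors give `(R/(s+1))^2`, and `W ≥ m+2` leaves
the rest `≤ 1`. Summing `1/(s+1)^2` gives `ζ(2) = π²/6`.
-/

open Real Nat

lemma choose_add_mul_div_pow_le_exp (m s : ℕ) {r : ℝ} (hr : 0 ≤ r) (hrm : r ≤ m) :
    ((s + m).choose m : ℝ) * (r / (r + 1 + s)) ^ m ≤ exp m := by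
  have ht : 0 < r + 1 + s := by positivity
  have hratio : ((s : ℝ) + m) * (r / (r + 1 + s)) ≤ m := by
    rw [mul_div_assoc', div_le_iff₀ ht]
    nlinarith [(Nat.cast_nonneg s : (0 : ℝ) ≤ s)]
  calc ((s + m).choose m : ℝ) * (r / (r + 1 + s)) ^ m
      ≤ ((s : ℝ) + m) ^ m / m ! * (r / (r + 1 + s)) ^ m := by
        gcongr
        exact_mod_cast Nat.choose_le_pow_div m (s + m)
    _ = (((s : ℝ) + m) * (r / (r + 1 + s))) ^ m / m ! := by rw [mul_pow]; ring
    _ ≤ (m : ℝ) ^ m / m ! := by gcongr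
    _ ≤ exp m := pow_div_factorial_le_exp _ (Nat.cast_nonneg m) m

lemma choose_add_mul_div_pow_le (m s W : ℕ) (hW : m + 2 ≤ W) {r : ℝ} (hr : 0 ≤ r)
    (hrm : r ≤ m) :
    ((s + m).choose m : ℝ) * (r / (r + 1 + s)) ^ W ≤ r ^ 2 * exp m * (1 / ((s : ℝ) + 1) ^ 2) := by
  set q := r / (r + 1 + s)
  have hq0 : 0 ≤ q := by positivity
  have hq1 : q ≤ 1 := div_le_one_of_le₀ (by linarith [(Nat.cast_nonneg s : (0 : ℝ) ≤ s)])
    (by positivity)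
  have hq : q ≤ r / (s + 1) := div_le_div_of_nonneg_left hr (by positivity) (by linarith)
  calc ((s + m).choose m : ℝ) * q ^ W
      ≤ ((s + m).choose m : ℝ) * q ^ m * q ^ 2 := by
        rw [mul_assoc, ← pow_add]
        exact mul_le_mul_of_nonneg_left (pow_le_pow_of_le_one hq0 hq1 hW) (by positivity)
    _ ≤ exp m * (r / (s + 1)) ^ 2 := by
        gcongr
        exact choose_add_mul_div_pow_le_exp m s hr hrm
    _ = r ^ 2 * exp m * (1 / ((s : ℝ) + 1) ^ 2) := by rw [div_pow]; ring

lemma hasSum_one_div_nat_add_one_sq :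
    HasSum (fun s : ℕ => 1 / ((s : ℝ) + 1) ^ 2) (π ^ 2 / 6) := by
  have h := (hasSum_nat_add_iff (f := fun n : ℕ => 1 / (n : ℝ) ^ 2) 1).mpr
    (by simpa using hasSum_zeta_two)
  simpa only [Nat.cast_add, Nat.cast_one] using h

theorem stmt19_general (R k W : ℕ)
    (hRk : R + 1 < k) (hkW : k + 1 ≤ W) :
    ∑' s : ℕ, ((s + k - 1).choose (k - 1) : ℝ) * ((R : ℝ) / ((R : ℝ) + 1 + s)) ^ W ≤
      (R : ℝ) ^ 2 * Real.exp ((k : ℝ) - 1) * Real.pi ^ 2 / 6 := by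
  obtain ⟨m, rfl⟩ : ∃ m, k = m + 1 := ⟨k - 1, by omega⟩
  have hRm : (R : ℝ) ≤ m := by exact_mod_cast (by omega : R ≤ m)
  have hbound := fun s => choose_add_mul_div_pow_le m s W (by omega) (Nat.cast_nonneg R) hRm
  have hmajorant := hasSum_one_div_nat_add_one_sq.mul_left ((R : ℝ) ^ 2 * exp m)
  have hsummable := hmajorant.summable.of_nonneg_of_le (fun s => by positivity) hbound
  simp only [Nat.add_sub_cancel, Nat.cast_add, Nat.cast_one, add_sub_cancel_right]
  calc _ ≤ (R : ℝ) ^ 2 * exp m * (π ^ 2 / 6) := hasSum_le hbound hsummable.hasSum hmajorant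
    _ = _ := by ring

/-- Eq. (eqmajolemasytemp) of the paper:
`∑_{t=R+1}^∞ C(t-R+k-2, k-1) (R/t)^W ≤ R² e^{k-1} π²/6` for positive integers
`R < k-1` and `W ≥ k+1` (the sum is reindexed by `t = R+1+s`, `s ∈ ℕ`). -/
theorem stmt19 (R k W : ℕ) (hR : 0 < R) (hk : 0 < k) (hW : 0 < W)
    (hRk : R + 1 < k) (hkW : k + 1 ≤ W) :
    ∑' s : ℕ, ((s + k - 1).choose (k - 1) : ℝ) * ((R : ℝ) / ((R : ℝ) + 1 + s)) ^ W ≤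
      (R : ℝ) ^ 2 * Real.exp ((k : ℝ) - 1) * Real.pi ^ 2 / 6 :=
  stmt19_general R k W hRk hkW
end
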